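/- arXiv:2508.18286 — 3 statements merged into one kernel-verified Lean document; each statement's English description precedes it below -/
import Mathlib

section
/- Define b(n) by ∑_{n≥0} b(n) q^n = f_2^3/f_1. Then for all n ≥ 0, b(11n+25) = −b(n/11), where b(n/11) is interpreted as 0 when 11 does not divide n. -/
/-!
Writing `ψ = f₂² / f₁`, we have `f₂³ / f₁ = ψ · f₂`. Gauss's identity `ψ = ∑_{j ∈ ℤ} q^{2j² + j}`
and Euler's pentagonal theorem `f₂ = ∑_{j ∈ ℤ} (-1)^j q^{3j² + j}` are the specialisations
`q ↦ q², z ↦ q` and `q ↦ q³, z ↦ -q` of the Jacobi triple product, which follows from its finite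
form in Gaussian binomials. Hence `b(N) = ∑ (-1)^j` over `2i² + i + 3j² + j = N`, and with
`x = 6j + 1`, `y = 4i + 1` this is half the number of solutions of `2x² + 3y² = 24N + 5` with
`x ≡ 1 (mod 6)` and `y` odd, each counted with sign `±1` as `x ≡ 1` or `7 (mod 12)`.

For `N = 11n + 25` the number `24N + 5` is divisible by `11`, so every solution has
`x ≡ ±2y (mod 11)`. On the class `x ≡ 2y` the integral isometry
`(x, y) ↦ ((5x + 12y)/11, (8x - 5y)/11)` is a sign-reversing involution, and `y ↦ -y` carries the
class `x ≡ -2y` onto it. What survives inclusion-exclusion is minus the contribution of the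
solutions with `11 ∣ x, y`; these exist only if `11 ∣ n` and are then, after dividing by `-11` and
`11`, the solutions for `n / 11`.
-/

/-- `f m` is the formal power series `∏_{k ≥ 1} (1 - q^{m k})` (for `m ≥ 1`),
realized via the fact that its `n`-th coefficient equals that of the
finite product `∏_{k=1}^{n} (1 - q^{m k})`. -/
noncomputable def f (m : ℕ) : PowerSeries ℤ :=
  PowerSeries.mk fun n =>
    PowerSeries.coeff n (∏ k ∈ Finset.Icc 1 n, (1 - (PowerSeries.X : PowerSeries ℤ) ^ (m * k)))

open Finset PowerSeries

noncomputable section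

section DvdSubOne

variable {R : Type*} [CommRing R]

lemma dvd_mul_sub_one {a x y : R} (hx : a ∣ x - 1) (hy : a ∣ y - 1) : a ∣ x * y - 1 := by
  rw [show x * y - 1 = (x - 1) * y + (y - 1) by ring]
  exact dvd_add (hx.mul_right y) hy

lemma dvd_prod_sub_one {a : R} {ι : Type*} {t : Finset ι} {g : ι → R} (h : ∀ i ∈ t, a ∣ g i - 1) :
    a ∣ ∏ i ∈ t, g i - 1 :=
  prod_induction g (fun x => a ∣ x - 1) (fun _ _ => dvd_mul_sub_one) (by simp) h

lemma X_pow_dvd_prod_one_sub_X_pow_sub_one {E : ℕ} {t : Finset ℕ} {e : ℕ → ℕ}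
    (h : ∀ k ∈ t, E ≤ e k) : (X : R⟦X⟧) ^ E ∣ ∏ k ∈ t, (1 - X ^ e k) - 1 :=
  dvd_prod_sub_one fun k hk => by
    rw [sub_sub_cancel_left]
    exact (pow_dvd_pow X (h k hk)).neg_right

lemma coeff_X_pow_mul_of_dvd_sub_one {u : R⟦X⟧} {E M N : ℕ} (hu : X ^ M ∣ u - 1)
    (hN : N < E + M) : coeff N (X ^ E * u) = if N = E then 1 else 0 := by
  rw [coeff_X_pow_mul']
  split_ifs with h₁ h₂ h₂
  · subst h₂
    simpa [sub_eq_zero] using X_pow_dvd_iff.1 hu 0 (by omega)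
  · simpa [coeff_one, show N - E ≠ 0 by omega] using X_pow_dvd_iff.1 hu (N - E) (by omega)
  · omega
  · rfl

end DvdSubOne

section QuadraticFactor

open Polynomial

variable {R : Type*} [CommSemiring R] (p : Polynomial R) (a b c : R)

lemma Polynomial.coeff_mul_quadratic_zero :
    (p * (C a + C b * X + C c * X ^ 2)).coeff 0 = p.coeff 0 * a := by
  simp [Polynomial.mul_coeff_zero]

lemma Polynomial.coeff_mul_quadratic_one :
    (p * (C a + C b * X + C c * X ^ 2)).coeff 1 = p.coeff 1 * a + p.coeff 0 * b := by
  simp [mul_add, ← mul_assoc, Polynomial.coeff_mul_X_pow', Polynomial.coeff_mul_X]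

lemma Polynomial.coeff_mul_quadratic_add_two (i : ℕ) :
    (p * (C a + C b * X + C c * X ^ 2)).coeff (i + 2) =
      p.coeff (i + 2) * a + p.coeff (i + 1) * b + p.coeff i * c := by
  simp only [mul_add, Polynomial.coeff_add, Polynomial.coeff_mul_C, ← mul_assoc,
    Polynomial.coeff_mul_X_pow, Polynomial.coeff_mul_X]

end QuadraticFactor

section Reindex

variable {M : Type*} [CommMonoid M] (F : ℕ → M)

lemma Finset.prod_Ioc_zero_two_mul (n : ℕ) :
    ∏ k ∈ Ioc 0 (2 * n), F k = ∏ k ∈ Ioc 0 n, F (2 * k - 1) * F (2 * k) := by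
  induction n with
  | zero => simp
  | succ n ih =>
    rw [show 2 * (n + 1) = 2 * n + 1 + 1 by ring, prod_Ioc_succ_top (by omega),
      prod_Ioc_succ_top (by omega), ih, prod_Ioc_succ_top (by omega),
      show 2 * (n + 1) - 1 = 2 * n + 1 by omega, mul_assoc]
    rfl

lemma Finset.prod_Ioc_zero_three_mul (n : ℕ) :
    ∏ k ∈ Ioc 0 (3 * n), F k = ∏ k ∈ Ioc 0 n, F (3 * k - 2) * F (3 * k - 1) * F (3 * k) := by
  induction n with
  | zero => simp
  | succ n ih =>
    rw [show 3 * (n + 1) = 3 * n + 1 + 1 + 1 by ring, prod_Ioc_succ_top (by omega),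
      prod_Ioc_succ_top (by omega), prod_Ioc_succ_top (by omega), ih, prod_Ioc_succ_top (by omega),
      show 3 * (n + 1) - 1 = 3 * n + 1 + 1 by omega, show 3 * (n + 1) - 2 = 3 * n + 1 by omega]
    simp only [mul_assoc]
    rfl

end Reindex

lemma sum_range_sub_eq_sum_Icc {M : Type*} [AddCommMonoid M] (g : ℤ → M) (n : ℕ) :
    ∑ i ∈ range (2 * n + 1), g (i - n) = ∑ j ∈ Icc (-(n : ℤ)) n, g j := by
  refine sum_nbij' (fun i => (i : ℤ) - n) (fun j => (j + n).toNat) ?_ ?_ ?_ ?_ (fun _ _ => rfl) <;>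
  · intro x hx
    simp only [mem_range, mem_Icc] at *
    omega

lemma pow_add_eq_pow_natAbs_sub {M : Type*} [Monoid M] {ε : M} (hε : ε ^ 2 = 1) (n i : ℕ) :
    ε ^ (n + i) = ε ^ ((i : ℤ) - n).natAbs := by
  rw [show n + i = ((i : ℤ) - n).natAbs + 2 * min i n by omega, pow_add, pow_mul, hε, one_pow,
    mul_one]

lemma abs_le_mul_sq_add {d : ℕ} (hd : 2 ≤ d) (j : ℤ) : |j| ≤ d * j ^ 2 + j := by
  have hd' : (2 : ℤ) ≤ d := by exact_mod_cast hd
  rcases abs_cases j with ⟨h, -⟩ | ⟨h, hj⟩ <;> rw [h] <;> nlinarith [sq_nonneg j]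

lemma sum_antidiagonal_ite_mul_ite {R : Type*} [Semiring R] {A B : ℤ} (hA : 0 ≤ A) (hB : 0 ≤ B)
    (c : R) (N : ℕ) :
    ∑ p ∈ antidiagonal N, (if A = p.1 then 1 else 0) * (if B = p.2 then c else 0) =
      if A + B = N then c else 0 := by
  calc _ = ∑ p ∈ antidiagonal N, if (A.toNat, B.toNat) = p then c else 0 := by
        refine sum_congr rfl fun p _ => ?_
        rw [ite_zero_mul_ite_zero, one_mul]
        exact if_congr (by simp only [Prod.ext_iff]; omega) rfl rfl
    _ = _ := by
        rw [sum_ite_eq]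
        exact if_congr (by rw [HasAntidiagonal.mem_antidiagonal]; omega) rfl rfl

namespace QSeries

section GaussBinom

variable (s : ℕ)

def gaussBinom : ℕ → ℕ → ℤ⟦X⟧
  | 0, 0 => 1
  | 0, _ + 1 => 0
  | _ + 1, 0 => 1
  | m + 1, k + 1 => gaussBinom m (k + 1) + X ^ (s * (m - k)) * gaussBinom m k

def qPoch (n : ℕ) : ℤ⟦X⟧ := ∏ k ∈ Ioc 0 n, (1 - X ^ (s * k))

lemma gaussBinom_succ_succ (m k : ℕ) :
    gaussBinom s (m + 1) (k + 1) = gaussBinom s m (k + 1) + X ^ (s * (m - k)) * gaussBinom s m k :=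
  rfl

@[simp] lemma gaussBinom_zero_right (m : ℕ) : gaussBinom s m 0 = 1 := by
  cases m <;> rfl

lemma gaussBinom_eq_zero_of_lt {m k : ℕ} (h : m < k) : gaussBinom s m k = 0 := by
  induction m generalizing k with
  | zero => obtain ⟨k, rfl⟩ := Nat.exists_eq_add_of_lt h; rfl
  | succ m ih =>
    obtain ⟨k, rfl⟩ : ∃ j, k = j + 1 := ⟨k - 1, by omega⟩
    rw [gaussBinom_succ_succ, ih (by omega), ih (by omega), mul_zero, add_zero]

@[simp] lemma gaussBinom_self (m : ℕ) : gaussBinom s m m = 1 := by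
  induction m with
  | zero => rfl
  | succ m ih => rw [gaussBinom_succ_succ, gaussBinom_eq_zero_of_lt s (by omega), ih]; simp

lemma qPoch_succ (n : ℕ) : qPoch s (n + 1) = qPoch s n * (1 - X ^ (s * (n + 1))) :=
  prod_Ioc_succ_top (Nat.zero_le _) _

lemma qPoch_mul_prod_Ioc {m n : ℕ} (h : m ≤ n) :
    qPoch s m * ∏ k ∈ Ioc m n, (1 - X ^ (s * k)) = qPoch s n :=
  prod_Ioc_consecutive _ (Nat.zero_le _) h

lemma qPoch_ne_zero (hs : 0 < s) (n : ℕ) : qPoch s n ≠ 0 := by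
  have : constantCoeff (qPoch s n) = 1 := by
    rw [qPoch, map_prod]
    exact prod_eq_one fun k hk => by
      simp [(mem_Ioc.1 hk).1.ne', hs.ne']
  exact fun h => by simp [h] at this

lemma gaussBinom_mul_qPoch (a b : ℕ) :
    gaussBinom s (a + b) b * qPoch s b = ∏ k ∈ Ioc a (a + b), (1 - X ^ (s * k)) := by
  induction b generalizing a with
  | zero => simp [qPoch]
  | succ b ihb =>
    induction a with
    | zero => simp [qPoch]
    | succ a iha =>
      have hpascal := gaussBinom_succ_succ s (a + b + 1) b
      rw [show a + b + 1 - b = a + 1 by omega] at hpascal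
      have h₁ := ihb (a + 1)
      rw [show a + 1 + b = a + b + 1 by omega] at h₁
      rw [show a + (b + 1) = a + b + 1 by omega] at iha
      rw [show a + 1 + (b + 1) = a + b + 1 + 1 by omega, hpascal, qPoch_succ,
        prod_Ioc_succ_top (by omega)]
      rw [← prod_Ioc_consecutive _ (Nat.le_succ a) (by omega : a + 1 ≤ a + b + 1), qPoch_succ,
        Nat.Ioc_succ_singleton, prod_singleton] at iha
      linear_combination iha + X ^ (s * (a + 1)) * (1 - X ^ (s * (b + 1))) * h₁

lemma gaussBinom_mul_qPoch_mul_qPoch {m k : ℕ} (hk : k ≤ m) :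
    gaussBinom s m k * (qPoch s k * qPoch s (m - k)) = qPoch s m := by
  have h := gaussBinom_mul_qPoch s (m - k) k
  rw [Nat.sub_add_cancel hk] at h
  rw [← mul_assoc, h, mul_comm, qPoch_mul_prod_Ioc s (Nat.sub_le m k)]

lemma gaussBinom_symm (hs : 0 < s) {m k : ℕ} (hk : k ≤ m) :
    gaussBinom s m (m - k) = gaussBinom s m k := by
  refine mul_right_cancel₀ (mul_ne_zero (qPoch_ne_zero s hs k) (qPoch_ne_zero s hs (m - k))) ?_
  rw [gaussBinom_mul_qPoch_mul_qPoch s hk, mul_comm (qPoch s k),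
    ← gaussBinom_mul_qPoch_mul_qPoch s (Nat.sub_le m k), Nat.sub_sub_self hk]

lemma gaussBinom_succ_succ' (hs : 0 < s) (m k : ℕ) :
    gaussBinom s (m + 1) (k + 1) =
      X ^ (s * (k + 1)) * gaussBinom s m (k + 1) + gaussBinom s m k := by
  rcases lt_trichotomy k m with h | rfl | h
  · rw [← gaussBinom_symm s hs (show k + 1 ≤ m + 1 by omega),
      show m + 1 - (k + 1) = (m - k - 1) + 1 by omega, gaussBinom_succ_succ,
      show m - (m - k - 1) = k + 1 by omega, show m - k - 1 + 1 = m - k by omega,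
      show m - k - 1 = m - (k + 1) by omega, gaussBinom_symm s hs h.le, gaussBinom_symm s hs h]
    ring
  · simp [gaussBinom_eq_zero_of_lt s (Nat.lt_succ_self k)]
  · simp [gaussBinom_eq_zero_of_lt, h, Nat.lt_succ_of_lt h]

lemma gaussBinom_add_two_add_two (hs : 0 < s) (m i : ℕ) :
    X ^ (s * (i + 2)) * gaussBinom s (m + 2) (i + 2) =
      X ^ (2 * (s * (i + 2))) * gaussBinom s m (i + 2)
        + X ^ (s * (i + 2)) * (1 + X ^ (s * (m + 1))) * gaussBinom s m (i + 1)
        + X ^ (s * (m + 2)) * gaussBinom s m i := by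
  rcases le_or_gt i m with hi | hi
  · obtain ⟨t, rfl⟩ := Nat.exists_eq_add_of_le hi
    rw [gaussBinom_succ_succ, show i + t + 1 - (i + 1) = t by omega,
      gaussBinom_succ_succ' s hs, gaussBinom_succ_succ' s hs]
    ring
  · simp [gaussBinom_eq_zero_of_lt, hi, Nat.lt_succ_of_lt hi, show m < i + 2 by omega]

lemma X_pow_dvd_gaussBinom_mul_qPoch_sub_one (hs : 0 < s) {n i : ℕ} (hi : i ≤ 2 * n) :
    X ^ (s * (n - ((i : ℤ) - n).natAbs + 1)) ∣ gaussBinom s (2 * n) i * qPoch s n - 1 := by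
  -- by symmetry it suffices to treat `j = min i (2n - i)`, where the product is over `k > j`
  have key : ∀ j ≤ n, X ^ (s * (j + 1)) ∣ gaussBinom s (2 * n) j * qPoch s n - 1 := by
    intro j hj
    have h := gaussBinom_mul_qPoch s (2 * n - j) j
    rw [Nat.sub_add_cancel (by omega)] at h
    rw [← qPoch_mul_prod_Ioc s hj, ← mul_assoc, h]
    refine dvd_mul_sub_one (X_pow_dvd_prod_one_sub_X_pow_sub_one fun k hk => ?_)
      (X_pow_dvd_prod_one_sub_X_pow_sub_one fun k hk => ?_) <;>
    · have := (mem_Ioc.1 hk).1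
      exact Nat.mul_le_mul_left s (by omega)
  rcases le_total i n with h | h
  · rw [show n - ((i : ℤ) - n).natAbs = i by omega]
    exact key i h
  · rw [← gaussBinom_symm s hs hi, show n - ((i : ℤ) - n).natAbs = 2 * n - i by omega]
    exact key _ (by omega)

end GaussBinom

section InfProd

/-- Factors `≡ 1 (mod X ^ k)`: then the `n`-th coefficient of `∏_{k ≤ M} F k` no longer depends on
`M ≥ n`, and `infProd F` collects these stable coefficients. -/
def Admissible (F : ℕ → ℤ⟦X⟧) : Prop := ∀ k, 0 < k → X ^ k ∣ F k - 1

def infProd (F : ℕ → ℤ⟦X⟧) : ℤ⟦X⟧ := mk fun n => coeff n (∏ k ∈ Ioc 0 n, F k)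

variable {F G : ℕ → ℤ⟦X⟧}

lemma Admissible.mul (hF : Admissible F) (hG : Admissible G) : Admissible (F * G) :=
  fun k hk => dvd_mul_sub_one (hF k hk) (hG k hk)

lemma admissible_one_add_C_mul_X_pow (ε : ℤ) {e : ℕ → ℕ} (he : ∀ k, 0 < k → k ≤ e k) :
    Admissible fun k => 1 + C ε * X ^ e k := fun k hk => by
  rw [add_sub_cancel_left]
  exact (pow_dvd_pow X (he k hk)).mul_left _

lemma admissible_one_sub_X_pow {e : ℕ → ℕ} (he : ∀ k, 0 < k → k ≤ e k) :
    Admissible fun k => 1 - X ^ e k := by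
  simpa [sub_eq_add_neg] using admissible_one_add_C_mul_X_pow (-1) he

lemma admissible_one_add_X_pow {e : ℕ → ℕ} (he : ∀ k, 0 < k → k ≤ e k) :
    Admissible fun k => 1 + X ^ e k := by
  simpa using admissible_one_add_C_mul_X_pow 1 he

lemma X_pow_dvd_prod_Ioc_sub_one (hF : Admissible F) (N M : ℕ) :
    X ^ (N + 1) ∣ ∏ k ∈ Ioc N M, F k - 1 :=
  dvd_prod_sub_one fun k hk => (pow_dvd_pow X (mem_Ioc.1 hk).1).trans (hF k (by grind))

lemma coeff_infProd (hF : Admissible F) {N M : ℕ} (h : N ≤ M) :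
    coeff N (infProd F) = coeff N (∏ k ∈ Ioc 0 M, F k) := by
  obtain ⟨u, hu⟩ := X_pow_dvd_prod_Ioc_sub_one hF N M
  rw [infProd, coeff_mk, ← prod_Ioc_consecutive _ (Nat.zero_le N) h, sub_eq_iff_eq_add.1 hu,
    mul_add, mul_one, map_add, mul_left_comm, coeff_X_pow_mul', if_neg (by omega), zero_add]

lemma infProd_mul (hF : Admissible F) (hG : Admissible G) :
    infProd F * infProd G = infProd (F * G) := by
  ext N
  have : coeff N (infProd (F * G)) = coeff N ((∏ k ∈ Ioc 0 N, F k) * ∏ k ∈ Ioc 0 N, G k) := by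
    rw [infProd, coeff_mk, ← prod_mul_distrib]
    rfl
  rw [this, coeff_mul, coeff_mul]
  refine sum_congr rfl fun p hp => ?_
  have := mem_antidiagonal.1 hp
  rw [coeff_infProd hF (by omega : p.1 ≤ N), coeff_infProd hG (by omega : p.2 ≤ N)]

lemma infProd_congr (h : ∀ k, 0 < k → F k = G k) : infProd F = infProd G := by
  ext N
  rw [infProd, infProd, coeff_mk, coeff_mk, prod_congr rfl fun k hk => h k (mem_Ioc.1 hk).1]

lemma infProd_eq_of_prod_eq (hF : Admissible F) {c : ℕ} (hc : 0 < c)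
    (h : ∀ n, ∏ k ∈ Ioc 0 (c * n), F k = ∏ k ∈ Ioc 0 n, G k) : infProd F = infProd G := by
  ext N
  rw [coeff_infProd hF (Nat.le_mul_of_pos_left N hc), h, infProd, coeff_mk]

end InfProd

section Jacobi

variable (d : ℕ)

/-- `∏_{k=1}^{n} (1 + q^{2k-1} z) (z + q^{2k-1})` with `q = X ^ d`, as a polynomial in `z`. -/
def jacobiPoly (n : ℕ) : Polynomial ℤ⟦X⟧ :=
  ∏ k ∈ Ioc 0 n, (1 + Polynomial.C (X ^ (d * (2 * k - 1))) * Polynomial.X) *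
    (Polynomial.X + Polynomial.C (X ^ (d * (2 * k - 1))))

lemma jacobiPoly_succ (n : ℕ) :
    jacobiPoly d (n + 1) = jacobiPoly d n *
      (Polynomial.C (X ^ (d * (2 * n + 1))) + Polynomial.C (1 + (X ^ (d * (2 * n + 1))) ^ 2) *
        Polynomial.X + Polynomial.C (X ^ (d * (2 * n + 1))) * Polynomial.X ^ 2) := by
  rw [jacobiPoly, jacobiPoly, prod_Ioc_succ_top (Nat.zero_le _),
    show 2 * (n + 1) - 1 = 2 * n + 1 by omega]
  simp only [map_add, map_one, map_pow]
  ring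

/-- The finite Jacobi triple product, with both sides multiplied by `X ^ (2 d n i)` so that no
negative exponent `(i - n)²` occurs. -/
lemma coeff_jacobiPoly_mul_X_pow (hd : 0 < d) (n i : ℕ) :
    (jacobiPoly d n).coeff i * X ^ (2 * d * n * i) =
      X ^ (d * (i ^ 2 + n ^ 2)) * gaussBinom (2 * d) (2 * n) i := by
  induction n generalizing i with
  | zero =>
    rcases i with _ | i
    · simp [jacobiPoly]
    · simp [jacobiPoly, Polynomial.coeff_one, gaussBinom_eq_zero_of_lt]
  | succ n ih =>
    rw [jacobiPoly_succ, show 2 * (n + 1) = 2 * n + 2 by omega]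
    match i with
    | 0 =>
      have h₀ := ih 0
      rw [Polynomial.coeff_mul_quadratic_zero]
      simp only [gaussBinom_zero_right] at h₀ ⊢
      linear_combination X ^ (d * (2 * n + 1)) * h₀
    | 1 =>
      have h₀ := ih 0
      rw [Polynomial.coeff_mul_quadratic_one, gaussBinom_succ_succ,
        gaussBinom_succ_succ' _ (by omega)]
      simp only [gaussBinom_zero_right, Nat.sub_zero] at h₀ ⊢
      linear_combination X ^ (d * (2 * n + 1)) * X ^ (2 * d) * ih 1
        + (1 + (X ^ (d * (2 * n + 1))) ^ 2) * X ^ (2 * d * (n + 1)) * h₀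
    | i + 2 =>
      rw [Polynomial.coeff_mul_quadratic_add_two]
      refine mul_right_cancel₀ (pow_ne_zero (2 * d * (i + 2)) X_ne_zero) ?_
      linear_combination (X ^ (d * (2 * n + 1)) * X ^ (4 * d * (i + 2))) * ih (i + 2)
        + ((1 + (X ^ (d * (2 * n + 1))) ^ 2) * X ^ (2 * d * (n + 2 * i + 4))) * ih (i + 1)
        + (X ^ (d * (2 * n + 1)) * X ^ (2 * d * (2 * n + 2 * i + 4))) * ih i
        - X ^ (d * ((i + 2) ^ 2 + (n + 1) ^ 2)) *
          gaussBinom_add_two_add_two (2 * d) (by omega) (2 * n) i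

lemma coeff_jacobiPoly (hd : 0 < d) (n i : ℕ) :
    (jacobiPoly d n).coeff i =
      X ^ (d * ((i : ℤ) - n).natAbs ^ 2) * gaussBinom (2 * d) (2 * n) i := by
  have hexp : d * ((i : ℤ) - n).natAbs ^ 2 + 2 * d * n * i = d * (i ^ 2 + n ^ 2) := by
    zify
    rw [sq_abs]
    ring
  refine mul_right_cancel₀ (pow_ne_zero (2 * d * n * i) (X_ne_zero (R := ℤ))) ?_
  rw [coeff_jacobiPoly_mul_X_pow d hd, mul_right_comm, ← pow_add, hexp]

lemma natDegree_jacobiPoly_le (n : ℕ) : (jacobiPoly d n).natDegree ≤ 2 * n := by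
  refine (Polynomial.natDegree_prod_le _ _).trans ?_
  calc _ ≤ ∑ _k ∈ Ioc 0 n, 2 := sum_le_sum fun k _ => by compute_degree
    _ = 2 * n := by simp [mul_comm]

lemma eval_jacobiPoly (hd : 0 < d) (n : ℕ) (z : ℤ⟦X⟧) :
    (jacobiPoly d n).eval z =
      ∑ i ∈ range (2 * n + 1),
        X ^ (d * ((i : ℤ) - n).natAbs ^ 2) * gaussBinom (2 * d) (2 * n) i * z ^ i := by
  rw [Polynomial.eval_eq_sum_range' (Nat.lt_succ_of_le (natDegree_jacobiPoly_le d n))]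
  simp only [coeff_jacobiPoly d hd]

/-- The `k`-th factor `(1 - q^{2k}) (1 + q^{2k-1} z) (1 + q^{2k-1} z⁻¹)` of the Jacobi triple
product at `q = X ^ d`, `z = ε X`. -/
def jacobiFactor (ε : ℤ) (k : ℕ) : ℤ⟦X⟧ :=
  (1 + C ε * X ^ (d * (2 * k - 1) - 1)) * (1 + C ε * X ^ (d * (2 * k - 1) + 1)) *
    (1 - X ^ (2 * d * k))

def jacobiCoeff (ε : ℤ) (N : ℕ) : ℤ :=
  ∑ j ∈ Icc (-(N : ℤ)) N, if d * j ^ 2 + j = N then ε ^ j.natAbs else 0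

variable {d} {ε : ℤ}

lemma eval_jacobiPoly_C_mul_X (hd : 0 < d) (hε : ε ^ 2 = 1) (n : ℕ) :
    (jacobiPoly d n).eval (C ε * X) * qPoch (2 * d) n =
      (C ε * X) ^ n * ∏ k ∈ Ioc 0 n, jacobiFactor d ε k := by
  have hC : (C ε : ℤ⟦X⟧) ^ 2 = 1 := by rw [← map_pow, hε, map_one]
  have hpow : (C ε * X : ℤ⟦X⟧) ^ n = ∏ _k ∈ Ioc 0 n, C ε * X := by simp
  rw [jacobiPoly, Polynomial.eval_prod, qPoch, ← prod_mul_distrib, hpow, ← prod_mul_distrib]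
  refine prod_congr rfl fun k hk => ?_
  have hpos : 0 < d * (2 * k - 1) := Nat.mul_pos hd (by have := (mem_Ioc.1 hk).1; omega)
  obtain ⟨b, hb⟩ : ∃ b, d * (2 * k - 1) = b + 1 := ⟨d * (2 * k - 1) - 1, by omega⟩
  simp only [jacobiFactor, Polynomial.eval_mul, Polynomial.eval_add, Polynomial.eval_one,
    Polynomial.eval_C, Polynomial.eval_X, hb, Nat.add_sub_cancel]
  linear_combination -(X : ℤ⟦X⟧) ^ (b + 1) * (1 - X ^ (2 * d * k)) * (1 + C ε * X ^ (b + 2)) * hC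

lemma coeff_X_pow_mul_gaussBinom_mul_qPoch (hd : 0 < d) {N i : ℕ} (hi : i ≤ 2 * (N + 1)) :
    coeff (N + (N + 1)) (X ^ (d * ((i : ℤ) - (N + 1 : ℕ)).natAbs ^ 2 + i) *
      (gaussBinom (2 * d) (2 * (N + 1)) i * qPoch (2 * d) (N + 1))) =
      if d * ((i : ℤ) - (N + 1 : ℕ)).natAbs ^ 2 + i = N + (N + 1) then 1 else 0 := by
  rw [coeff_X_pow_mul_of_dvd_sub_one (X_pow_dvd_gaussBinom_mul_qPoch_sub_one _ (by omega) hi)]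
  · simp only [eq_comm]
  have hcases : i + ((i : ℤ) - (N + 1 : ℕ)).natAbs = N + 1 ∨
      i = N + 1 + ((i : ℤ) - (N + 1 : ℕ)).natAbs := by omega
  generalize ((i : ℤ) - (N + 1 : ℕ)).natAbs = m at hcases ⊢
  obtain ⟨k, hk⟩ : ∃ k, N + 1 = m + k := ⟨N + 1 - m, by omega⟩
  rw [hk, Nat.add_sub_cancel_left]
  have h₁ : m ^ 2 + 2 * (k + 1) ≤ d * m ^ 2 + 2 * d * (k + 1) := by
    nlinarith [Nat.zero_le (m ^ 2), Nat.zero_le k]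
  have h₂ : 2 * m ≤ m ^ 2 + 1 := by nlinarith [sq_nonneg ((m : ℤ) - 1)]
  omega

/-- Evaluate the finite product at `z = ε X` and multiply by `(q²; q²)_{N+1}`: modulo a high power
of `X` each `gaussBinom · qPoch` is `1`, so in degree `2N + 1` only the terms with
`d (i - n)² + (i - n) = N` survive. -/
lemma coeff_prod_jacobiFactor (hd : 2 ≤ d) (hε : ε ^ 2 = 1) (N : ℕ) :
    coeff N (∏ k ∈ Ioc 0 (N + 1), jacobiFactor d ε k) = jacobiCoeff d ε N := by
  set g : ℤ → ℤ := fun j => if d * j ^ 2 + j = N then ε ^ j.natAbs else 0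
  have key :=
    congrArg (coeff (N + (N + 1))) (eval_jacobiPoly_C_mul_X (d := d) (by omega) hε (N + 1))
  rw [eval_jacobiPoly _ (by omega), sum_mul, map_sum, mul_pow, ← map_pow, mul_assoc, coeff_C_mul,
    coeff_X_pow_mul] at key
  have hterm : ∀ i ∈ range (2 * (N + 1) + 1),
      coeff (N + (N + 1)) (X ^ (d * ((i : ℤ) - (N + 1 : ℕ)).natAbs ^ 2) *
        gaussBinom (2 * d) (2 * (N + 1)) i * (C ε * X) ^ i * qPoch (2 * d) (N + 1)) =
        ε ^ i * if d * ((i : ℤ) - (N + 1 : ℕ)).natAbs ^ 2 + i = N + (N + 1) then 1 else 0 := by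
    intro i hi
    rw [mul_pow, ← map_pow, ← coeff_X_pow_mul_gaussBinom_mul_qPoch (by omega)
      (by simpa [Nat.lt_succ_iff] using hi), ← coeff_C_mul, pow_add]
    ring_nf
  have hcond : ∀ i : ℕ, d * ((i : ℤ) - (N + 1 : ℕ)).natAbs ^ 2 + i = N + (N + 1) ↔
      d * ((i : ℤ) - (N + 1 : ℕ)) ^ 2 + ((i : ℤ) - (N + 1 : ℕ)) = N := by
    intro i
    zify
    rw [sq_abs]
    constructor <;> intro h <;> linarith
  have hsign : ε ^ (N + 1) * ε ^ (N + 1) = 1 := by rw [← pow_add, ← two_mul, pow_mul, hε, one_pow]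
  calc coeff N (∏ k ∈ Ioc 0 (N + 1), jacobiFactor d ε k)
      = ε ^ (N + 1) * (ε ^ (N + 1) * coeff N (∏ k ∈ Ioc 0 (N + 1), jacobiFactor d ε k)) := by
        rw [← mul_assoc, hsign, one_mul]
    _ = ∑ i ∈ range (2 * (N + 1) + 1), ε ^ ((N + 1) + i) *
          if d * ((i : ℤ) - (N + 1 : ℕ)).natAbs ^ 2 + i = N + (N + 1) then 1 else 0 := by
        rw [← key, sum_congr rfl hterm, mul_sum]
        simp only [pow_add, mul_assoc]
    _ = ∑ i ∈ range (2 * (N + 1) + 1), g (i - (N + 1 : ℕ)) := by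
        refine sum_congr rfl fun i _ => ?_
        simp only [g, pow_add_eq_pow_natAbs_sub hε, hcond, mul_ite, mul_one, mul_zero]
    _ = ∑ j ∈ Icc (-(N + 1 : ℕ) : ℤ) (N + 1 : ℕ), g j := sum_range_sub_eq_sum_Icc g (N + 1)
    _ = jacobiCoeff d ε N := by
        refine (sum_subset (Icc_subset_Icc (by omega) (by omega)) fun j hj hj' => ?_).symm
        simp only [mem_Icc] at hj hj'
        refine if_neg fun h => ?_
        rcases (by omega : j = N + 1 ∨ j = -(N + 1)) with rfl | rfl <;> nlinarith

lemma admissible_jacobiFactor (hd : 2 ≤ d) (ε : ℤ) : Admissible (jacobiFactor d ε) := by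
  refine ((admissible_one_add_C_mul_X_pow ε fun k hk => ?_).mul
    (admissible_one_add_C_mul_X_pow ε fun k hk => ?_)).mul
    (admissible_one_sub_X_pow fun k hk => ?_) <;>
  · have := Nat.mul_le_mul_right (2 * k - 1) hd
    have := Nat.mul_le_mul_right k hd
    grind

/-- The Jacobi triple product `∏ (1 - q^{2k}) (1 + q^{2k-1} z) (1 + q^{2k-1} z⁻¹) = ∑ q^{j²} z^j`
at `q = X ^ d`, `z = ε X`. -/
lemma infProd_jacobiFactor (hd : 2 ≤ d) (hε : ε ^ 2 = 1) :
    infProd (jacobiFactor d ε) = mk (jacobiCoeff d ε) := by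
  ext N
  rw [coeff_infProd (admissible_jacobiFactor hd ε) (Nat.le_succ N), coeff_prod_jacobiFactor hd hε,
    coeff_mk]

lemma jacobiCoeff_eq_sum_Icc (hd : 2 ≤ d) (ε : ℤ) {N M : ℕ} (h : N ≤ M) :
    jacobiCoeff d ε N = ∑ j ∈ Icc (-(M : ℤ)) M, if d * j ^ 2 + j = N then ε ^ j.natAbs else 0 := by
  refine sum_subset (Icc_subset_Icc (by omega) (by omega)) fun j _ hj => if_neg fun hN => hj ?_
  have := abs_le_mul_sq_add hd j
  rw [mem_Icc, ← abs_le]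
  omega

end Jacobi

section Identities

lemma f_eq_infProd (m : ℕ) : f m = infProd fun k => 1 - X ^ (m * k) := rfl

lemma admissible_f (m : ℕ) (hm : 0 < m) : Admissible fun k => 1 - X ^ (m * k) :=
  admissible_one_sub_X_pow fun k _ => Nat.le_mul_of_pos_left k hm

lemma admissible_one_sub_X_pow_odd : Admissible fun k => 1 - X ^ (2 * k - 1) :=
  admissible_one_sub_X_pow fun k hk => by omega

lemma admissible_one_add_X_pow_odd : Admissible fun k => 1 + X ^ (2 * k - 1) :=
  admissible_one_add_X_pow fun k hk => by omega

lemma f_one_eq_f_two_mul : f 1 = f 2 * infProd fun k => 1 - X ^ (2 * k - 1) := by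
  rw [f_eq_infProd, f_eq_infProd, infProd_mul (admissible_f 2 two_pos) admissible_one_sub_X_pow_odd]
  refine infProd_eq_of_prod_eq (admissible_f 1 one_pos) two_pos fun n => ?_
  rw [prod_Ioc_zero_two_mul]
  refine prod_congr rfl fun k _ => ?_
  simp only [Pi.mul_apply, one_mul]
  ring

lemma infProd_odd_mul_infProd_odd :
    (infProd fun k => 1 - X ^ (2 * k - 1)) * (infProd fun k => 1 + X ^ (2 * k - 1)) =
      infProd fun k => 1 - X ^ (4 * k - 2) := by
  rw [infProd_mul admissible_one_sub_X_pow_odd admissible_one_add_X_pow_odd]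
  congr 1
  funext k
  rw [Pi.mul_apply, show 4 * k - 2 = (2 * k - 1) + (2 * k - 1) by omega]
  ring

lemma f_two_eq_f_four_mul : f 2 = f 4 * infProd fun k => 1 - X ^ (4 * k - 2) := by
  rw [f_eq_infProd, f_eq_infProd, infProd_mul (admissible_f 4 (by norm_num))
    (admissible_one_sub_X_pow fun k hk => by omega)]
  refine infProd_eq_of_prod_eq (admissible_f 2 two_pos) two_pos fun n => ?_
  rw [prod_Ioc_zero_two_mul]
  refine prod_congr rfl fun k hk => ?_
  rw [Pi.mul_apply, show 2 * (2 * k - 1) = 4 * k - 2 by omega, show 2 * (2 * k) = 4 * k by ring]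
  ring

lemma infProd_odd_mul_f_four :
    (infProd fun k => 1 + X ^ (2 * k - 1)) * f 4 = mk (jacobiCoeff 2 1) := by
  have hodd : (infProd fun k => 1 + X ^ (2 * k - 1)) =
      infProd fun k => (1 + X ^ (4 * k - 3)) * (1 + X ^ (4 * k - 1)) := by
    refine infProd_eq_of_prod_eq admissible_one_add_X_pow_odd two_pos fun n => ?_
    rw [prod_Ioc_zero_two_mul]
    refine prod_congr rfl fun k hk => ?_
    rw [show 2 * (2 * k - 1) - 1 = 4 * k - 3 by omega, show 2 * (2 * k) - 1 = 4 * k - 1 by omega]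
  rw [← infProd_jacobiFactor le_rfl (one_pow 2), hodd, f_eq_infProd,
    infProd_mul (show Admissible fun k => (1 + X ^ (4 * k - 3)) * (1 + X ^ (4 * k - 1)) from
      (admissible_one_add_X_pow fun k hk => by omega).mul
        (admissible_one_add_X_pow fun k hk => by omega))
      (admissible_f 4 (by norm_num))]
  refine infProd_congr fun k hk => ?_
  simp [jacobiFactor, show 2 * (2 * k - 1) - 1 = 4 * k - 3 by omega,
    show 2 * (2 * k - 1) + 1 = 4 * k - 1 by omega]

lemma f_two_eq_mk_jacobiCoeff : f 2 = mk (jacobiCoeff 3 (-1)) := by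
  rw [← infProd_jacobiFactor (by norm_num) (by norm_num), f_eq_infProd]
  refine infProd_eq_of_prod_eq (admissible_f 2 two_pos) (c := 3) (by norm_num) fun n => ?_
  rw [prod_Ioc_zero_three_mul]
  refine prod_congr rfl fun k hk => ?_
  have := (mem_Ioc.1 hk).1
  simp only [jacobiFactor, map_neg, map_one, neg_one_mul, ← sub_eq_add_neg,
    show 2 * (3 * k - 2) = 3 * (2 * k - 1) - 1 by omega,
    show 2 * (3 * k - 1) = 3 * (2 * k - 1) + 1 by omega,
    show 2 * (3 * k) = 2 * 3 * k by ring]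

lemma mk_jacobiCoeff_mul_f_one : mk (jacobiCoeff 2 1) * f 1 = f 2 ^ 2 := by
  rw [← infProd_odd_mul_f_four, f_one_eq_f_two_mul]
  calc (infProd fun k => 1 + X ^ (2 * k - 1)) * f 4 * (f 2 * infProd fun k => 1 - X ^ (2 * k - 1))
      = f 2 * (f 4 * ((infProd fun k => 1 - X ^ (2 * k - 1)) *
          (infProd fun k => 1 + X ^ (2 * k - 1)))) := by ring
    _ = f 2 ^ 2 := by rw [infProd_odd_mul_infProd_odd, ← f_two_eq_f_four_mul, sq]

lemma coeff_mk_jacobiCoeff_mul_mk_jacobiCoeff (N : ℕ) :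
    coeff N (mk (jacobiCoeff 2 1) * mk (jacobiCoeff 3 (-1))) =
      ∑ q ∈ Icc (-(N : ℤ)) N ×ˢ Icc (-(N : ℤ)) N,
        if 2 * q.1 ^ 2 + q.1 + (3 * q.2 ^ 2 + q.2) = N then (-1) ^ q.2.natAbs else 0 := by
  rw [coeff_mul, sum_product]
  calc _ = ∑ p ∈ antidiagonal N, ∑ i ∈ Icc (-(N : ℤ)) N, ∑ j ∈ Icc (-(N : ℤ)) N,
        (if (2 : ℕ) * i ^ 2 + i = p.1 then 1 else 0) *
          (if (3 : ℕ) * j ^ 2 + j = p.2 then (-1) ^ j.natAbs else 0) := by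
        refine sum_congr rfl fun p hp => ?_
        have := mem_antidiagonal.1 hp
        rw [coeff_mk, coeff_mk, jacobiCoeff_eq_sum_Icc le_rfl 1 (by omega : p.1 ≤ N),
          jacobiCoeff_eq_sum_Icc (by norm_num) (-1) (by omega : p.2 ≤ N), sum_mul_sum]
        simp only [one_pow]
    _ = _ := by
        rw [sum_comm]
        refine sum_congr rfl fun i _ => ?_
        rw [sum_comm]
        refine sum_congr rfl fun j _ => ?_
        have hi := abs_le_mul_sq_add le_rfl i
        have hj := abs_le_mul_sq_add (by norm_num : 2 ≤ 3) j
        rw [sum_antidiagonal_ite_mul_ite (by push_cast at hi ⊢; linarith [abs_nonneg i])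
          (by push_cast at hj ⊢; linarith [abs_nonneg j])]
        push_cast
        rfl

end Identities

end QSeries

namespace TwoSqAddThreeSq

def reps (N : ℕ) : Finset (ℤ × ℤ) :=
  (Icc (-(24 * N + 5 : ℤ)) (24 * N + 5) ×ˢ Icc (-(24 * N + 5 : ℤ)) (24 * N + 5)).filter
    fun p => 2 * p.1 ^ 2 + 3 * p.2 ^ 2 = 24 * N + 5 ∧ p.1 % 6 = 1 ∧ p.2 % 2 = 1

def sign12 (x : ℤ) : ℤ := if x % 12 = 1 then 1 else -1

lemma mem_reps {N : ℕ} {x y : ℤ} :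
    (x, y) ∈ reps N ↔ 2 * x ^ 2 + 3 * y ^ 2 = 24 * N + 5 ∧ x % 6 = 1 ∧ y % 2 = 1 := by
  rw [reps, mem_filter, mem_product, mem_Icc, mem_Icc, and_iff_right_iff_imp]
  rintro ⟨h, -⟩
  refine ⟨⟨?_, ?_⟩, ?_, ?_⟩ <;> nlinarith [sq_nonneg (x - 1), sq_nonneg (x + 1), sq_nonneg (y - 1),
    sq_nonneg (y + 1)]

lemma neg_snd_mem_reps_iff {N : ℕ} {x y : ℤ} : (x, -y) ∈ reps N ↔ (x, y) ∈ reps N := by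
  simp only [mem_reps, neg_sq, Int.neg_emod_two]

lemma sign12_six_mul_add_one (j : ℤ) : sign12 (6 * j + 1) = (-1) ^ j.natAbs := by
  rcases Int.even_or_odd j with h | h
  · rw [sign12, if_pos (by obtain ⟨r, rfl⟩ := h; omega), (Int.natAbs_even.2 h).neg_one_pow]
  · rw [sign12, if_neg (by obtain ⟨r, rfl⟩ := h; omega), (Int.natAbs_odd.2 h).neg_one_pow]

/-- `(i, j) ↦ (6 j + 1, 4 i + 1)` turns `2 i² + i + 3 j² + j = N` into `2 x² + 3 y² = 24 N + 5`. -/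
lemma sum_Icc_product_eq_sum_reps (N : ℕ) :
    ∑ q ∈ Icc (-(N : ℤ)) N ×ˢ Icc (-(N : ℤ)) N,
        (if 2 * q.1 ^ 2 + q.1 + (3 * q.2 ^ 2 + q.2) = N then (-1) ^ q.2.natAbs else 0) =
      ∑ p ∈ (reps N).filter (fun p => p.2 % 4 = 1), sign12 p.1 := by
  rw [← sum_filter]
  refine sum_nbij' (fun q => (6 * q.2 + 1, 4 * q.1 + 1)) (fun p => ((p.2 - 1) / 4, (p.1 - 1) / 6))
    ?_ ?_ ?_ ?_ ?_
  · rintro ⟨i, j⟩ hq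
    simp only [mem_filter, mem_product, mem_Icc] at hq ⊢
    refine ⟨mem_reps.2 ⟨by linear_combination 24 * hq.2, by omega, by omega⟩, by omega⟩
  · rintro ⟨x, y⟩ hp
    simp only [mem_filter, mem_product, mem_Icc, mem_reps] at hp ⊢
    obtain ⟨⟨h, hx, -⟩, hy⟩ := hp
    obtain ⟨i, rfl⟩ : ∃ i, y = 4 * i + 1 := ⟨(y - 1) / 4, by omega⟩
    obtain ⟨j, rfl⟩ : ∃ j, x = 6 * j + 1 := ⟨(x - 1) / 6, by omega⟩
    have hN : 2 * i ^ 2 + i + (3 * j ^ 2 + j) = N := by linarith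
    have hi := abs_le_mul_sq_add (d := 2) le_rfl i
    have hj := abs_le_mul_sq_add (d := 3) (by norm_num) j
    push_cast at hi hj
    rw [abs_le] at hi hj
    rw [show (4 * i + 1 - 1) / 4 = i by omega, show (6 * j + 1 - 1) / 6 = j by omega]
    exact ⟨⟨⟨by omega, by omega⟩, by omega, by omega⟩, hN⟩
  · rintro ⟨i, j⟩ -
    simp only [Prod.mk.injEq]
    omega
  · rintro ⟨x, y⟩ hp
    simp only [mem_filter, mem_reps] at hp
    simp only [Prod.mk.injEq]
    omega
  · rintro ⟨i, j⟩ -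
    exact (sign12_six_mul_add_one j).symm

lemma sum_reps_eq_two_mul (N : ℕ) :
    ∑ p ∈ reps N, sign12 p.1 = 2 * ∑ p ∈ (reps N).filter (fun p => p.2 % 4 = 1), sign12 p.1 := by
  rw [← sum_filter_add_sum_filter_not (reps N) (fun p => p.2 % 4 = 1), two_mul]
  congr 1
  refine sum_nbij' (fun p => (p.1, -p.2)) (fun p => (p.1, -p.2)) ?_ ?_ ?_ ?_ ?_
  · rintro ⟨x, y⟩ hp
    simp only [mem_filter] at hp ⊢
    have := (mem_reps.1 hp.1).2.2
    exact ⟨neg_snd_mem_reps_iff.2 hp.1, by omega⟩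
  · rintro ⟨x, y⟩ hp
    simp only [mem_filter] at hp ⊢
    exact ⟨neg_snd_mem_reps_iff.2 hp.1, by omega⟩
  all_goals simp

lemma two_mul_sq_add_three_mul_sq_eq {x y a b : ℤ} (ha : 11 * a = 5 * x + 12 * y)
    (hb : 11 * b = 8 * x - 5 * y) : 2 * a ^ 2 + 3 * b ^ 2 = 2 * x ^ 2 + 3 * y ^ 2 := by
  have h : (121 : ℤ) * (2 * a ^ 2 + 3 * b ^ 2) = 121 * (2 * x ^ 2 + 3 * y ^ 2) := by
    linear_combination (2 * (11 * a + 5 * x + 12 * y)) * ha + (3 * (11 * b + 8 * x - 5 * y)) * hb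
  exact mul_left_cancel₀ (by norm_num) h

/-- A rational isometry of `2x² + 3y²`; it is integral on the solutions with `x ≡ 2y (mod 11)`. -/
def isometry11 (p : ℤ × ℤ) : ℤ × ℤ := ((5 * p.1 + 12 * p.2) / 11, (8 * p.1 - 5 * p.2) / 11)

lemma isometry11_mem_and_involutive_and_sign12 {N : ℕ} {p : ℤ × ℤ}
    (hp : p ∈ (reps N).filter (fun p => 11 ∣ p.1 - 2 * p.2)) :
    isometry11 p ∈ (reps N).filter (fun p => 11 ∣ p.1 - 2 * p.2) ∧
      isometry11 (isometry11 p) = p ∧ sign12 (isometry11 p).1 = -sign12 p.1 := by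
  obtain ⟨x, y⟩ := p
  simp only [isometry11, sign12, Prod.mk.injEq, mem_filter, mem_reps] at hp ⊢
  obtain ⟨⟨h, hx, hy⟩, hc⟩ := hp
  have ha : 11 * ((5 * x + 12 * y) / 11) = 5 * x + 12 * y := Int.mul_ediv_cancel' (by omega)
  have hb : 11 * ((8 * x - 5 * y) / 11) = 8 * x - 5 * y := Int.mul_ediv_cancel' (by omega)
  refine ⟨⟨⟨(two_mul_sq_add_three_mul_sq_eq ha hb).trans h, by omega, by omega⟩, by omega⟩,
    ⟨by omega, by omega⟩, ?_⟩
  split_ifs <;> omega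

lemma sum_reps_filter_sub_eq_zero (N : ℕ) :
    ∑ p ∈ (reps N).filter (fun p => 11 ∣ p.1 - 2 * p.2), sign12 p.1 = 0 :=
  sum_involution (fun p _ => isometry11 p)
    (fun _ hp => by rw [(isometry11_mem_and_involutive_and_sign12 hp).2.2, add_neg_cancel])
    (fun _ hp hne heq => by
      have := (isometry11_mem_and_involutive_and_sign12 hp).2.2
      rw [heq] at this
      omega)
    (fun _ hp => (isometry11_mem_and_involutive_and_sign12 hp).1)
    (fun _ hp => (isometry11_mem_and_involutive_and_sign12 hp).2.1)

lemma sum_reps_filter_add_eq_zero (N : ℕ) :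
    ∑ p ∈ (reps N).filter (fun p => 11 ∣ p.1 + 2 * p.2), sign12 p.1 = 0 := by
  rw [← sum_reps_filter_sub_eq_zero N]
  refine sum_nbij' (fun p => (p.1, -p.2)) (fun p => (p.1, -p.2)) ?_ ?_ ?_ ?_ ?_
  · rintro ⟨x, y⟩ hp
    simp only [mem_filter] at hp ⊢
    exact ⟨neg_snd_mem_reps_iff.2 hp.1, by omega⟩
  · rintro ⟨x, y⟩ hp
    simp only [mem_filter] at hp ⊢
    exact ⟨neg_snd_mem_reps_iff.2 hp.1, by omega⟩
  all_goals simp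

lemma reps_eq_filter_union_filter {N : ℕ} (hN : (11 : ℤ) ∣ 24 * N + 5) :
    reps N = (reps N).filter (fun p => 11 ∣ p.1 - 2 * p.2) ∪
      (reps N).filter (fun p => 11 ∣ p.1 + 2 * p.2) := by
  rw [← filter_or, eq_comm, filter_true_of_mem]
  rintro ⟨x, y⟩ hp
  obtain ⟨h, -, -⟩ := mem_reps.1 hp
  obtain ⟨c, hc⟩ := hN
  have hdvd : (11 : ℤ) ∣ (x - 2 * y) * (x + 2 * y) :=
    ⟨6 * c - x ^ 2 - 2 * y ^ 2, by linear_combination 6 * h + 6 * hc⟩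
  exact (by norm_num : Prime (11 : ℤ)).dvd_mul.1 hdvd

lemma filter_sub_inter_filter_add (N : ℕ) :
    (reps N).filter (fun p => 11 ∣ p.1 - 2 * p.2) ∩ (reps N).filter (fun p => 11 ∣ p.1 + 2 * p.2) =
      (reps N).filter (fun p => 11 ∣ p.1 ∧ 11 ∣ p.2) := by
  rw [← filter_and]
  exact filter_congr fun p _ => by omega

lemma filter_eleven_dvd_reps_eq_empty {N : ℕ} (hN : ¬ (121 : ℤ) ∣ 24 * N + 5) :
    (reps N).filter (fun p => 11 ∣ p.1 ∧ 11 ∣ p.2) = ∅ := by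
  refine filter_eq_empty_iff.2 fun ⟨x, y⟩ hp ⟨⟨a, hx⟩, ⟨b, hy⟩⟩ => hN ?_
  obtain ⟨h, -, -⟩ := mem_reps.1 hp
  subst hx hy
  exact ⟨2 * a ^ 2 + 3 * b ^ 2, by linear_combination -h⟩

lemma sum_filter_eleven_dvd_reps {N m : ℕ} (hN : (24 * N + 5 : ℤ) = 121 * (24 * m + 5)) :
    ∑ p ∈ (reps N).filter (fun p => 11 ∣ p.1 ∧ 11 ∣ p.2), sign12 p.1 =
      ∑ p ∈ reps m, sign12 p.1 := by
  refine sum_nbij' (fun p => (-(p.1 / 11), p.2 / 11)) (fun p => (-(11 * p.1), 11 * p.2))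
    ?_ ?_ ?_ ?_ ?_
  · rintro ⟨x, y⟩ hp
    simp only [mem_filter, mem_reps] at hp ⊢
    obtain ⟨⟨h, hx, hy⟩, ⟨a, rfl⟩, ⟨b, rfl⟩⟩ := hp
    rw [Int.mul_ediv_cancel_left _ (by norm_num), Int.mul_ediv_cancel_left _ (by norm_num)]
    refine ⟨mul_left_cancel₀ (by norm_num : (121 : ℤ) ≠ 0) ?_, by omega, by omega⟩
    linear_combination h + hN
  · rintro ⟨a, b⟩ hp
    simp only [mem_filter, mem_reps] at hp ⊢
    exact ⟨⟨by linear_combination 121 * hp.1 - hN, by omega, by omega⟩, by omega, by omega⟩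
  · rintro ⟨x, y⟩ hp
    simp only [mem_filter] at hp
    simp only [Prod.mk.injEq]
    omega
  · rintro ⟨a, b⟩ -
    simp only [Prod.mk.injEq]
    omega
  · rintro ⟨x, y⟩ hp
    simp only [mem_filter] at hp
    simp only [sign12]
    exact if_congr (by omega) rfl rfl

lemma sum_reps_eleven_mul_add (n : ℕ) :
    ∑ p ∈ reps (11 * n + 25), sign12 p.1 =
      if 11 ∣ n then -∑ p ∈ reps (n / 11), sign12 p.1 else 0 := by
  have h := sum_union_inter (f := fun p => sign12 p.1)
    (s₁ := (reps (11 * n + 25)).filter (fun p => 11 ∣ p.1 - 2 * p.2))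
    (s₂ := (reps (11 * n + 25)).filter (fun p => 11 ∣ p.1 + 2 * p.2))
  rw [← reps_eq_filter_union_filter ⟨24 * n + 55, by push_cast; ring⟩, sum_reps_filter_sub_eq_zero,
    sum_reps_filter_add_eq_zero, filter_sub_inter_filter_add] at h
  split_ifs with hn
  · obtain ⟨m, rfl⟩ := hn
    rw [sum_filter_eleven_dvd_reps (m := m) (by push_cast; ring)] at h
    rw [Nat.mul_div_cancel_left m (by norm_num)]
    linarith
  · rw [filter_eleven_dvd_reps_eq_empty fun h121 => hn (by push_cast at h121; omega),
      sum_empty] at h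
    linarith

end TwoSqAddThreeSq

namespace QSeries

lemma f_one_ne_zero : f 1 ≠ 0 := fun h => by
  simpa [f] using congrArg (coeff 0) h

lemma eq_mk_mul_mk_of_mul_f_one_eq {B : ℤ⟦X⟧} (hB : B * f 1 = f 2 ^ 3) :
    B = mk (jacobiCoeff 2 1) * mk (jacobiCoeff 3 (-1)) := by
  refine mul_right_cancel₀ f_one_ne_zero ?_
  rw [hB, ← f_two_eq_mk_jacobiCoeff, mul_right_comm, mk_jacobiCoeff_mul_f_one]
  ring

lemma two_mul_coeff_eq_sum_reps {B : ℤ⟦X⟧} (hB : B * f 1 = f 2 ^ 3) (N : ℕ) :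
    2 * coeff N B = ∑ p ∈ TwoSqAddThreeSq.reps N, TwoSqAddThreeSq.sign12 p.1 := by
  rw [eq_mk_mul_mk_of_mul_f_one_eq hB, coeff_mk_jacobiCoeff_mul_mk_jacobiCoeff,
    TwoSqAddThreeSq.sum_Icc_product_eq_sum_reps, TwoSqAddThreeSq.sum_reps_eq_two_mul]

end QSeries

end

/-- With `∑ b(n) q^n = f_2^3 / f_1`, we have `b(11n+25) = -b(n/11)`,
interpreted as `0` when `11 ∤ n`. -/
theorem b_eleven_dissection (B : PowerSeries ℤ) (hB : B * f 1 = (f 2) ^ 3) (n : ℕ) :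
    PowerSeries.coeff (11 * n + 25) B =
      if 11 ∣ n then -(PowerSeries.coeff (n / 11) B) else 0 := by
  have h := TwoSqAddThreeSq.sum_reps_eleven_mul_add n
  rw [← QSeries.two_mul_coeff_eq_sum_reps hB, ← QSeries.two_mul_coeff_eq_sum_reps hB] at h
  split_ifs at h ⊢ <;> linarith
end

section
/- If the coefficient of q^n in f_2^6 = ∏_{m≥1}(1−q^{2m})^6 is nonzero and n ≡ 3 (mod 7), then n ≡ 24 (mod 49). -/
open PowerSeries Finset


noncomputable section Jacobi

local notation "S" => PowerSeries (Polynomial ℤ)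

private def q : S := PowerSeries.X
private def Z : S := PowerSeries.C Polynomial.X

private def gb : ℕ → ℤ → S
  | 0, i => if i = 0 then 1 else 0
  | (m+1), i => gb m i + q ^ (2*((m:ℤ)+1-i)).toNat * gb m (i-1)

private lemma gb_succ (m : ℕ) (i : ℤ) :
    gb (m+1) i = gb m i + q ^ (2*((m:ℤ)+1-i)).toNat * gb m (i-1) := rfl

private lemma gb_neg : ∀ (m : ℕ) (i : ℤ), i < 0 → gb m i = 0
  | 0, i, h => by simp [gb, h.ne]
  | (m+1), i, h => by
      rw [gb_succ, gb_neg m i h, gb_neg m (i-1) (by omega)]; simp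

private lemma gb_gt : ∀ (m : ℕ) (i : ℤ), (m:ℤ) < i → gb m i = 0
  | 0, i, h => by simp [gb]; omega
  | (m+1), i, h => by
      rw [gb_succ, gb_gt m i (by omega), gb_gt m (i-1) (by omega)]; simp

private lemma gb_zero : ∀ (m : ℕ), gb m 0 = 1
  | 0 => by simp [gb]
  | (m+1) => by
      rw [gb_succ, gb_zero m, show (0:ℤ)-1 = -1 by norm_num, gb_neg m (-1) (by omega)]; simp

private lemma gb_diag : ∀ (m : ℕ), gb m m = 1
  | 0 => by simp [gb]
  | (m+1) => by
      rw [gb_succ]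
      push_cast
      rw [gb_gt m ((m:ℤ)+1) (by omega), show ((m:ℤ)+1) - 1 = m by ring, gb_diag m,
        show (2*((m:ℤ)+1-((m:ℤ)+1))).toNat = 0 by omega]
      simp

private lemma pascal2 : ∀ (m : ℕ) (i : ℤ),
    gb (m+1) i = q ^ (2*i).toNat * gb m i + gb m (i-1)
  | 0, i => by
      rcases lt_trichotomy i 0 with h | h | h
      · rw [gb_neg 1 i h, gb_neg 0 i h, gb_neg 0 (i-1) (by omega)]; simp
      · subst h
        rw [gb_zero 1, gb_zero 0, show (0:ℤ)-1 = -1 by norm_num, gb_neg 0 (-1) (by omega)]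
        simp
      · rcases eq_or_lt_of_le (Int.add_one_le_of_lt h) with h1 | h1
        · have hi : i = 1 := by omega
          subst hi
          norm_num [gb_succ, gb]
        · rw [gb_gt 1 i (by push_cast; omega), gb_gt 0 i (by omega), gb_gt 0 (i-1) (by omega)]
          simp
  | (m+1), i => by
      rcases lt_trichotomy i 0 with h | h | h
      · rw [gb_neg _ i h, gb_neg _ i h, gb_neg _ (i-1) (by omega)]; simp
      · subst h
        rw [gb_zero, gb_zero, show (0:ℤ)-1 = -1 by norm_num, gb_neg _ (-1) (by omega)]
        simp
      rcases le_or_gt i ((m:ℤ)+1) with h2 | h2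
      · -- main case 1 ≤ i ≤ m+1
        conv_rhs => rw [gb_succ m i, gb_succ m (i-1)]
        conv_lhs => rw [gb_succ (m+1) i, pascal2 m i, pascal2 m (i-1)]
        have key : q ^ (2*((m:ℤ)+1+1-i)).toNat * q ^ (2*(i-1)).toNat
            = q ^ (2*i).toNat * q ^ (2*((m:ℤ)+1-i)).toNat := by
          rw [← pow_add, ← pow_add]; congr 1; omega
        push_cast at key ⊢
        rw [show (2*((m:ℤ)+1-(i-1))).toNat = (2*((m:ℤ)+1+1-i)).toNat by omega]
        linear_combination gb m (i-1) * key
      rcases eq_or_lt_of_le (Int.add_one_le_of_lt h2) with h3 | h3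
      · -- i = m+2
        have hi : i = (m:ℤ)+1+1 := by omega
        subst hi
        rw [gb_succ (m+1)]
        push_cast
        rw [gb_gt (m+1) ((m:ℤ)+1+1) (by push_cast; omega),
          show (2*((m:ℤ)+1+1-((m:ℤ)+1+1))).toNat = 0 by omega,
          show ((m:ℤ)+1+1) - 1 = ((m+1:ℕ):ℤ) by push_cast; ring, gb_diag (m+1)]
        simp
      · rw [gb_gt _ i (by push_cast; omega), gb_gt _ i (by push_cast; omega),
          gb_gt _ (i-1) (by push_cast; omega)]
        simp

private lemma pascal_double (m : ℕ) (i : ℤ) :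
    gb (m+2) i = q ^ (2*i).toNat * gb m i + (1 + q^(2*m+2)) * gb m (i-1)
      + q ^ (2*((m:ℤ)+2-i)).toNat * gb m (i-2) := by
  have h := gb_succ (m+1) i
  push_cast at h
  rw [show m+2 = (m+1)+1 from rfl, h, pascal2 m i, pascal2 m (i-1)]
  rw [show i-1-1 = i-2 by ring]
  rcases le_or_gt i 0 with h0 | h0
  · rw [gb_neg m (i-1) (by omega), gb_neg m (i-2) (by omega)]; ring
  rcases le_or_gt i ((m:ℤ)+1) with h1 | h1
  · have key : q ^ (2*((m:ℤ)+1+1-i)).toNat * q ^ (2*(i-1)).toNat = q^(2*m+2) := by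
      rw [← pow_add]; congr 1; omega
    rw [show (m:ℤ)+2-i = (m:ℤ)+1+1-i by ring]
    linear_combination gb m (i-1) * key
  · rw [gb_gt m (i-1) (by omega),
      show (m:ℤ)+2-i = (m:ℤ)+1+1-i by ring]
    ring

private def pe (N : ℕ) : S := ∏ k ∈ Icc 1 N, (1 - q^(2*k))

private lemma pe_zero : pe 0 = 1 := by simp [pe]

private lemma pe_succ (N : ℕ) : pe (N+1) = pe N * (1 - q^(2*N+2)) := by
  rw [pe, pe, prod_Icc_succ_top (by omega), show 2*(N+1) = 2*N+2 by ring]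

private lemma PI : ∀ (m i : ℕ), i ≤ m → pe i * pe (m-i) * gb m i = pe m
  | 0, i, h => by
      interval_cases i
      norm_num [pe_zero, gb]
  | (m+1), i, h => by
      rcases Nat.eq_zero_or_pos i with h0 | h0
      · subst h0
        have : gb (m+1) ((0:ℕ):ℤ) = 1 := by rw [Nat.cast_zero, gb_zero]
        rw [this, pe_zero]
        simp
      obtain ⟨a, rfl⟩ : ∃ a, i = a + 1 := ⟨i-1, by omega⟩
      rcases Nat.lt_or_ge m (a+1) with h1 | h1
      · have ham : a = m := by omega
        rw [ham, Nat.sub_self, pe_zero, gb_diag (m+1)]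
        ring
      · -- 1 ≤ a+1 ≤ m
        have hgs := gb_succ m ((a+1:ℕ):ℤ)
        push_cast at hgs
        push_cast
        rw [hgs,
          show (2*((m:ℤ)+1-((a:ℤ)+1))).toNat = 2*(m-a) by omega,
          show ((a:ℤ)+1-1) = ((a:ℕ):ℤ) by push_cast; ring]
        obtain ⟨b, hb⟩ : ∃ b, m - a = b+1 := ⟨m-a-1, by omega⟩
        rw [hb]
        have E1 := PI m (a+1) h1
        rw [show (m - (a+1)) = b by omega] at E1
        push_cast at E1
        have E2 := PI m a (by omega)
        rw [hb] at E2
        have E3 : pe (b+1) = pe b * (1 - q^(2*(b+1))) := by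
          rw [pe_succ, show 2*b+2 = 2*(b+1) by ring]
        have E4 : pe (a+1) = pe a * (1 - q^(2*a+2)) := by
          rw [pe_succ]
        have E5 : pe (m+1) = pe m * (1 - q^(2*m+2)) := by
          rw [pe_succ]
        have E6 : q^(2*(b+1)) * q^(2*a+2) = q^(2*m+2) := by
          rw [← pow_add]; congr 1; omega
        push_cast
        linear_combination (pe (a+1) * gb m ((a:ℤ)+1)) * E3 + (1-q^(2*(b+1))) * E1
          + (q^(2*(b+1)) * pe (b+1) * gb m ((a:ℤ))) * E4
          + (q^(2*(b+1)) * (1 - q^(2*a+2))) * E2 - E5 - (pe m) * E6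

private lemma tri_nonneg (x : ℤ) : 0 ≤ x*(x+1) := by
  rcases le_or_gt 0 x with h | h
  · exact mul_nonneg h (by omega)
  · nlinarith

private lemma qq {x : S} (a b : ℤ) (c d : ℕ) (ha : 0 ≤ a) (hb : 0 ≤ b) (h : a + c = b + d) :
    x^(a.toNat) * x^c = x^(b.toNat) * x^d := by
  rw [← pow_add, ← pow_add]; congr 1; omega

/-- summand of the finite Jacobi triple product -/
private def t (N : ℕ) (i : ℤ) : S :=
  (-1)^((i+N).toNat) * Z^(i.toNat) * q^(((i-N)*(i-N+1)).toNat) * gb (2*N) i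

private lemma t_neg (N : ℕ) (i : ℤ) (h : i < 0) : t N i = 0 := by
  rw [t, gb_neg _ _ h]; ring

private lemma t_gt (N : ℕ) (i : ℤ) (h : (2*N:ℤ) < i) : t N i = 0 := by
  rw [t, gb_gt _ _ (by push_cast at h ⊢; omega)]; ring

private lemma t_step (N i : ℕ) (hi : i ≤ 2*N+2) :
    t (N+1) (i:ℤ) = Z * t N ((i:ℤ)-1) - q^(2*N) * t N (i:ℤ)
      - Z^2*q^(2*N+2) * t N ((i:ℤ)-2) + Z*q^(4*N+2) * t N ((i:ℤ)-1) := by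
  have hpd := pascal_double (2*N) (i:ℤ)
  rw [t, show 2*(N+1) = 2*N+2 by ring, hpd, t, t, t]
  rw [show ((i:ℤ) + ((N:ℕ)+1:ℕ)).toNat = i+N+1 by push_cast; omega,
    show ((i:ℤ)).toNat = i by omega,
    show ((i:ℤ) + (N:ℕ)).toNat = i+N by omega,
    show (2*(i:ℤ)).toNat = 2*i by omega]
  have T1 : ((-1:S))^(i+N+1) * Z^i * q^((((i:ℤ)-(↑N+1))*(((i:ℤ)-(↑N+1))+1)).toNat) * (q^(2*i) * gb (2*N) (i:ℤ))
      = -(q^(2*N) * ((-1:S))^(i+N) * (Z^i * (q^((((i:ℤ)-↑N)*(((i:ℤ)-↑N)+1)).toNat) * gb (2*N) (i:ℤ)))) := by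
    have KEY : (q:S)^((((i:ℤ)-(↑N+1))*(((i:ℤ)-(↑N+1))+1)).toNat) * q^(2*i)
        = q^((((i:ℤ)-↑N)*(((i:ℤ)-↑N)+1)).toNat) * q^(2*N) :=
      qq _ _ _ _ (tri_nonneg _) (tri_nonneg _) (by push_cast; ring)
    rw [pow_succ]
    linear_combination (-((-1:S))^(i+N) * Z^i * gb (2*N) (i:ℤ)) * KEY
  have T2 : ((-1:S))^(i+N+1) * Z^i * q^((((i:ℤ)-(↑N+1))*(((i:ℤ)-(↑N+1))+1)).toNat) * ((1 + q^(2*(2*N)+2)) * gb (2*N) ((i:ℤ)-1))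
      = Z * ((-1:S))^(((i:ℤ)-1+↑N).toNat) * (Z^(((i:ℤ)-1).toNat) * (q^(((((i:ℤ)-1)-↑N)*((((i:ℤ)-1)-↑N)+1)).toNat) * gb (2*N) ((i:ℤ)-1)))
        + Z*q^(4*N+2) * ((-1:S))^(((i:ℤ)-1+↑N).toNat) * (Z^(((i:ℤ)-1).toNat) * (q^(((((i:ℤ)-1)-↑N)*((((i:ℤ)-1)-↑N)+1)).toNat) * gb (2*N) ((i:ℤ)-1))) := by
    rcases Nat.eq_zero_or_pos i with h0 | h0
    · subst h0
      rw [gb_neg (2*N) (((0:ℕ):ℤ)-1) (by norm_num)]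
      ring
    · have e1 : (((i:ℤ)-1)-↑N)*((((i:ℤ)-1)-↑N)+1) = ((i:ℤ)-(↑N+1))*(((i:ℤ)-(↑N+1))+1) := by ring
      have e2 : (((i:ℤ)-1+↑N)).toNat = i+N-1 := by omega
      have e3 : (((i:ℤ)-1)).toNat = i-1 := by omega
      have e4 : ((-1:S))^(i+N-1) = ((-1:S))^(i+N+1) := by
        rw [show i+N+1 = (i+N-1)+2 by omega, pow_add]; ring
      have e5 : (Z:S) * Z^(i-1) = Z^i := by
        rw [← pow_succ']; congr 1; omega
      rw [e1, e2, e3, e4]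
      rw [show 2*(2*N)+2 = 4*N+2 by ring]
      linear_combination (-(((-1:S))^(i+N+1) * q^((((i:ℤ)-(↑N+1))*(((i:ℤ)-(↑N+1))+1)).toNat) * gb (2*N) ((i:ℤ)-1) * (1 + q^(4*N+2)))) * e5
  have T3 : ((-1:S))^(i+N+1) * Z^i * q^((((i:ℤ)-(↑N+1))*(((i:ℤ)-(↑N+1))+1)).toNat) * (q^((2*((2*N:ℕ)+2-(i:ℤ))).toNat) * gb (2*N) ((i:ℤ)-2))
      = -(Z^2*q^(2*N+2) * ((-1:S))^(((i:ℤ)-2+↑N).toNat) * (Z^(((i:ℤ)-2).toNat) * (q^(((((i:ℤ)-2)-↑N)*((((i:ℤ)-2)-↑N)+1)).toNat) * gb (2*N) ((i:ℤ)-2)))) := by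
    rcases Nat.lt_or_ge i 2 with h0 | h0
    · rw [gb_neg (2*N) ((i:ℤ)-2) (by omega)]; ring
    · have e2 : (((i:ℤ)-2+↑N)).toNat = i+N-2 := by omega
      have e3 : (((i:ℤ)-2)).toNat = i-2 := by omega
      have e4 : ((-1:S))^(i+N-2) = ((-1:S))^(i+N+1) * (-1) := by
        rw [show i+N+1 = (i+N-2)+3 by omega, pow_add]; ring
      have e5 : (Z:S)^2 * Z^(i-2) = Z^i := by
        rw [← pow_add]; congr 1; omega
      have KEY : (q:S)^((((i:ℤ)-(↑N+1))*(((i:ℤ)-(↑N+1))+1)).toNat) * q^((2*((2*N:ℕ)+2-(i:ℤ))).toNat)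
          = q^(((((i:ℤ)-2)-↑N)*((((i:ℤ)-2)-↑N)+1)).toNat) * q^(2*N+2) := by
        refine qq _ _ _ _ (tri_nonneg _) (tri_nonneg _) ?_
        rw [show (((2*((2*N:ℕ)+2-(i:ℤ))).toNat : ℕ) : ℤ) = 2*(2*(N:ℤ)+2-(i:ℤ)) by omega]
        push_cast; ring
      rw [e2, e3, e4]
      linear_combination (((-1:S))^(i+N+1) * gb (2*N) ((i:ℤ)-2) * Z^i) * KEY
        - (((-1:S))^(i+N+1) * gb (2*N) ((i:ℤ)-2)
            * (q^(((((i:ℤ)-2)-↑N)*((((i:ℤ)-2)-↑N)+1)).toNat) * q^(2*N+2))) * e5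
  push_cast at T1 T2 T3 ⊢
  linear_combination T1 + T2 + T3

private def lhsJ (N : ℕ) : S :=
  (∏ k ∈ Icc 1 N, (1 - Z * q^(2*k))) * (∏ k ∈ Icc 1 N, (Z - q^(2*k-2)))

private def rhsJ (N : ℕ) : S := ∑ i ∈ range (2*N+1), t N (i:ℤ)

private lemma sum_t_range (N : ℕ) : ∀ (M : ℕ), 2*N+1 ≤ M → ∑ i ∈ range M, t N (i:ℤ) = rhsJ N
  | 0, hM => by omega
  | (m+1), hM => by
      rcases Nat.lt_or_ge (2*N+1) (m+1) with h | h
      · rw [sum_range_succ, sum_t_range N m (by omega), t_gt N _ (by push_cast; omega), add_zero]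
      · have hm : m+1 = 2*N+1 := by omega
        rw [hm, rhsJ]

private lemma FJTP : ∀ N, lhsJ N = rhsJ N
  | 0 => by
      norm_num [lhsJ, rhsJ, t, gb]
  | (N+1) => by
      have hL : lhsJ (N+1) = lhsJ N * ((1 - Z*q^(2*N+2)) * (Z - q^(2*N))) := by
        rw [lhsJ, lhsJ, prod_Icc_succ_top (by omega : 1 ≤ N+1),
          prod_Icc_succ_top (by omega : 1 ≤ N+1),
          show 2*(N+1) = 2*N+2 by ring, show 2*N+2-2 = 2*N by omega]
        ring
      rw [hL, FJTP N]
      conv_rhs => rw [rhsJ, show 2*(N+1)+1 = 2*N+3 by ring]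
      have S0 : ∑ i ∈ range (2*N+3), t N (i:ℤ) = rhsJ N := sum_t_range N _ (by omega)
      have S1 : ∑ i ∈ range (2*N+3), t N ((i:ℤ)-1) = rhsJ N := by
        rw [show 2*N+3 = (2*N+2)+1 by ring, sum_range_succ']
        have hc : ∀ k ∈ range (2*N+2), t N (((k+1:ℕ):ℤ)-1) = t N (k:ℤ) := by
          intro k _; congr 1; push_cast; ring
        rw [sum_congr rfl hc, show ((0:ℕ):ℤ)-1 = -1 by norm_num, t_neg N _ (by norm_num),
          add_zero, sum_t_range N _ (by omega)]
      have S2 : ∑ i ∈ range (2*N+3), t N ((i:ℤ)-2) = rhsJ N := by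
        rw [show 2*N+3 = (2*N+2)+1 by ring, sum_range_succ']
        have hc : ∀ k ∈ range (2*N+2), t N (((k+1:ℕ):ℤ)-2) = t N ((k:ℤ)-1) := by
          intro k _; congr 1; push_cast; ring
        rw [sum_congr rfl hc, show ((0:ℕ):ℤ)-2 = -2 by norm_num, t_neg N _ (by norm_num), add_zero]
        rw [show 2*N+2 = (2*N+1)+1 by ring, sum_range_succ']
        have hc2 : ∀ k ∈ range (2*N+1), t N (((k+1:ℕ):ℤ)-1) = t N (k:ℤ) := by
          intro k _; congr 1; push_cast; ring
        rw [sum_congr rfl hc2, show ((0:ℕ):ℤ)-1 = -1 by norm_num, t_neg N _ (by norm_num),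
          add_zero, sum_t_range N _ (by omega)]
      have hstep : ∀ i ∈ range (2*N+3), t (N+1) (i:ℤ)
          = Z * t N ((i:ℤ)-1) - q^(2*N) * t N (i:ℤ)
            - Z^2*q^(2*N+2) * t N ((i:ℤ)-2) + Z*q^(4*N+2) * t N ((i:ℤ)-1) := by
        intro i hi
        exact t_step N i (by simp only [mem_range] at hi; omega)
      rw [sum_congr rfl hstep]
      rw [sum_add_distrib, sum_sub_distrib, sum_sub_distrib, ← mul_sum, ← mul_sum, ← mul_sum,
        ← mul_sum, S0, S1, S2]
      ring

private lemma toNat_coe {a : ℤ} {b : ℕ} (h : a = (b:ℤ)) : a.toNat = b := by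
  subst h; exact Int.toNat_natCast b

private lemma dvd_mul_cong {m : ℕ} {a b c d : S} (h1 : (q:S)^m ∣ a - b) (h2 : (q:S)^m ∣ c - d) :
    (q:S)^m ∣ a*c - b*d := by
  have h : a*c - b*d = (a-b)*c + b*(c-d) := by ring
  rw [h]; exact dvd_add (h1.mul_right c) (h2.mul_left b)

private lemma prod_tail (m a : ℕ) : ∀ (b : ℕ), m ≤ 2*a → (q:S)^m ∣ ((∏ k ∈ Icc a b, (1 - q^(2*k))) - 1)
  | 0, hm => by
      rcases Nat.eq_zero_or_pos a with h | h
      · subst h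
        have : m = 0 := by omega
        subst this; simp
      · rw [Finset.Icc_eq_empty (by omega)]; simp
  | (b+1), hm => by
      rcases Nat.lt_or_ge (b+1) a with h | h
      · rw [Finset.Icc_eq_empty (by omega)]; simp
      · rw [prod_Icc_succ_top h]
        have key : (∏ k ∈ Icc a b, (1 - q^(2*k))) * (1 - q^(2*(b+1))) - 1
            = ((∏ k ∈ Icc a b, (1 - q^(2*k))) - 1) * (1 - q^(2*(b+1)))
              - q^(2*(b+1)) := by ring
        rw [key]
        refine dvd_sub (Dvd.dvd.mul_right (prod_tail m a b hm) _) ?_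
        exact pow_dvd_pow q (by omega)

private lemma pe_split (a b : ℕ) (h : a ≤ b) :
    pe b = pe a * ∏ k ∈ Ioc a b, (1 - q^(2*k)) := by
  rw [pe, pe, show (1:ℕ) = 0+1 from rfl, Finset.Icc_add_one_left_eq_Ioc, Finset.Icc_add_one_left_eq_Ioc,
    prod_Ioc_consecutive _ (Nat.zero_le a) h]

private lemma pe_diff (a b : ℕ) (hab : a ≤ b) (m : ℕ) (hm : m ≤ 2*a+2) :
    (q:S)^m ∣ pe b - pe a := by
  rw [pe_split a b hab]
  have h : pe a * (∏ k ∈ Ioc a b, (1 - q^(2*k))) - pe a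
      = pe a * ((∏ k ∈ Ioc a b, (1 - q^(2*k))) - 1) := by ring
  rw [h]
  have hmt : m ≤ 2*(a+1) := by omega
  have := prod_tail m (a+1) b hmt
  rw [Finset.Icc_add_one_left_eq_Ioc] at this
  exact this.mul_left _

private lemma pe_const (N : ℕ) : constantCoeff (pe N) = 1 := by
  induction N with
  | zero => rw [pe_zero]; simp
  | succ n ih =>
      rw [pe_succ, map_mul, ih, map_sub, map_pow, map_one]
      rw [show (q:S) = PowerSeries.X from rfl, constantCoeff_X]
      simp

private lemma unit_cancel {u v T : S} (hu : constantCoeff u = 1) (huv : u * T = v) {m : ℕ}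
    (hdvd : (q:S)^m ∣ v - u) : (q:S)^m ∣ T - 1 := by
  have hunit : IsUnit u := isUnit_iff_constantCoeff.mpr (by rw [hu]; exact isUnit_one)
  obtain ⟨U, rfl⟩ := hunit
  obtain ⟨w, hw⟩ := hdvd
  refine ⟨(↑U⁻¹ : S) * w, ?_⟩
  have hinv : (↑U⁻¹ : S) * (↑U : S) = 1 := U.inv_mul
  linear_combination (↑U⁻¹ : S) * huv + (↑U⁻¹ : S) * hw + (1 - T) * hinv

private lemma pe_gb_one (N i : ℕ) (hi : i ≤ 2*N) (m : ℕ) (hm1 : m ≤ 2*i+2)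
    (hm2 : m ≤ 2*(2*N-i)+2) : (q:S)^m ∣ (pe N * gb (2*N) (i:ℤ) - 1) := by
  have hPI := PI (2*N) i hi
  have huv : (pe i * pe (2*N-i)) * (pe N * gb (2*N) (i:ℤ)) = pe N * pe (2*N) := by
    linear_combination (pe N) * hPI
  refine unit_cancel ?_ huv ?_
  · rw [map_mul, pe_const, pe_const]; norm_num
  · rcases le_or_gt i N with h | h
    · exact dvd_mul_cong (pe_diff i N h m (by omega)) (pe_diff (2*N-i) (2*N) (by omega) m hm2)
    · exact dvd_mul_cong (dvd_sub_comm.mp (pe_diff N i (by omega) m (by omega)))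
        (pe_diff (2*N-i) (2*N) (by omega) m hm2)

private def th (N i : ℕ) : S :=
  (-1)^(i+N) * Z^i * q^((((i:ℤ)-N)*(((i:ℤ)-N)+1)).toNat)

private def H (N : ℕ) : S :=
  ∑ j ∈ range N, (-1)^j * q^(j*(j+1)) * Z^(N-1-j) * (∑ c ∈ range (2*j+1), Z^c)

private lemma t_nat (N i : ℕ) : t N (i:ℤ) = th N i * gb (2*N) (i:ℤ) := by
  rw [t, th, show ((i:ℤ)+N).toNat = i+N by omega, show ((i:ℤ)).toNat = i by omega]

private lemma stepA (N i n : ℕ) (hi : i ≤ 2*N) (hn : n+1 ≤ 2*N) :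
    (q:S)^(n+1) ∣ pe N * t N (i:ℤ) - th N i := by
  have hrw : pe N * t N (i:ℤ) - th N i
      = ((-1)^(i+N) * Z^i) * (q^((((i:ℤ)-N)*(((i:ℤ)-N)+1)).toNat)
          * (pe N * gb (2*N) (i:ℤ) - 1)) := by
    rw [t_nat, th]; ring
  rw [hrw]
  refine Dvd.dvd.mul_left ?_ _
  have h2 := Int.toNat_of_nonneg (tri_nonneg ((i:ℤ)-N))
  rcases le_or_gt i N with hcase | hcase
  · obtain ⟨w, hw⟩ := pe_gb_one N i hi (2*i+2) le_rfl (by omega)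
    have hrw2 : (q:S)^((((i:ℤ)-N)*(((i:ℤ)-N)+1)).toNat) * (pe N * gb (2*N) (i:ℤ) - 1)
        = q^((((i:ℤ)-N)*(((i:ℤ)-N)+1)).toNat + (2*i+2)) * w := by
      rw [pow_add, mul_assoc, ← hw]
    rw [hrw2]
    refine Dvd.dvd.mul_right (pow_dvd_pow q ?_) w
    have h5 : 2*(N:ℤ) ≤ (((((i:ℤ)-N)*(((i:ℤ)-N)+1)).toNat : ℕ) : ℤ) + (2*i+2) := by
      rw [h2]; nlinarith [tri_nonneg ((i:ℤ)-N+1)]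
    omega
  · obtain ⟨w, hw⟩ := pe_gb_one N i hi (2*(2*N-i)+2) (by omega) le_rfl
    have hrw2 : (q:S)^((((i:ℤ)-N)*(((i:ℤ)-N)+1)).toNat) * (pe N * gb (2*N) (i:ℤ) - 1)
        = q^((((i:ℤ)-N)*(((i:ℤ)-N)+1)).toNat + (2*(2*N-i)+2)) * w := by
      rw [pow_add, mul_assoc, ← hw]
    rw [hrw2]
    refine Dvd.dvd.mul_right (pow_dvd_pow q ?_) w
    have h5 : 2*(N:ℤ) ≤ (((((i:ℤ)-N)*(((i:ℤ)-N)+1)).toNat : ℕ) : ℤ) + (2*(2*(N:ℤ)-i)+2) := by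
      rw [h2]; nlinarith [tri_nonneg ((i:ℤ)-N-1)]
    omega

private lemma theta_sum (N : ℕ) :
    ∑ i ∈ range (2*N+1), th N i = (Z-1) * H N + th N (2*N) := by
  rw [sum_range_succ]
  congr 1
  rw [show 2*N = N+N by ring, sum_range_add, ← sum_range_reflect (fun i => th N i) N,
    ← sum_add_distrib, H, mul_sum]
  refine sum_congr rfl ?_
  intro j hj
  rw [mem_range] at hj
  have e1 : ((((N+j:ℕ):ℤ)-N)*((((N+j:ℕ):ℤ)-N)+1)).toNat = j*(j+1) :=
    toNat_coe (by push_cast; ring)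
  have e2 : ((((N-1-j:ℕ):ℤ)-N)*((((N-1-j:ℕ):ℤ)-N)+1)).toNat = j*(j+1) :=
    toNat_coe (by rw [show ((N-1-j:ℕ):ℤ) = (N:ℤ)-1-j by omega]; push_cast; ring)
  have sign1 : ((-1:S))^(N+j+N) = (-1)^j := by
    rw [show N+j+N = 2*N+j by ring, pow_add, pow_mul]; norm_num
  have sign2 : ((-1:S))^((N-1-j)+N) = (-1)^(j+1) := by
    rw [show (N-1-j)+N = 2*(N-1-j)+(j+1) by omega, pow_add, pow_mul]; norm_num
  have geom : (∑ c ∈ range (2*j+1), (Z:S)^c) * (Z - 1) = Z^(2*j+1) - 1 :=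
    geom_sum_mul Z (2*j+1)
  have zpow : (Z:S)^(N-1-j) * Z^(2*j+1) = Z^(N+j) := by
    rw [← pow_add]; congr 1; omega
  rw [th, th, e1, e2, sign1, sign2, pow_succ]
  linear_combination (-(((-1:S))^j * q^(j*(j+1)) * Z^(N-1-j))) * geom
    - (((-1:S))^j * q^(j*(j+1))) * zpow

private def U (N : ℕ) : S :=
  pe N * (∏ k ∈ Icc 1 N, (1 - Z * q^(2*k))) * (∏ k ∈ Icc 2 N, (Z - q^(2*k-2)))

private lemma lhs_factor (N : ℕ) (hN : 1 ≤ N) : pe N * lhsJ N = (Z - 1) * U N := by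
  rw [lhsJ, U, show Icc 1 N = insert 1 (Icc 2 N) from by ext x; simp; omega]
  rw [prod_insert (by simp), prod_insert (by simp)]
  norm_num
  ring

private lemma coeff_UH (n c : ℕ) (hc : c ≤ n) :
    (PowerSeries.coeff c) (U (n+1)) = (PowerSeries.coeff c) (H (n+1)) := by
  set N := n+1 with hN
  have key : (q:S)^(n+1) ∣ (Z-1) * (U N - H N) := by
    have h2 : pe N * lhsJ N = (Z-1) * U N := lhs_factor N (by omega)
    have h3 : pe N * lhsJ N = pe N * rhsJ N := by rw [FJTP]
    have h4 : (Z-1)*(U N - H N) = pe N * rhsJ N - (Z-1)*H N := by rw [← h3, h2]; ring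
    rw [h4, rhsJ, mul_sum]
    have h5 : (q:S)^(n+1) ∣ ∑ i ∈ range (2*N+1), (pe N * t N (i:ℤ) - th N i) := by
      refine dvd_sum ?_
      intro i hi
      rw [mem_range] at hi
      exact stepA N i n (by omega) (by omega)
    have h6 := theta_sum N
    have h7 : ∑ i ∈ range (2*N+1), pe N * t N (i:ℤ) - (Z-1) * H N
        = (∑ i ∈ range (2*N+1), (pe N * t N (i:ℤ) - th N i)) + th N (2*N) := by
      rw [sum_sub_distrib]; linear_combination h6
    rw [h7]
    refine dvd_add h5 ?_
    rw [th]
    have he : ((((2*N:ℕ):ℤ)-N)*((((2*N:ℕ):ℤ)-N)+1)).toNat = N*(N+1) :=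
      toNat_coe (by push_cast; ring)
    rw [he]
    exact Dvd.dvd.mul_left (pow_dvd_pow q (by nlinarith)) _
  have hcoeff : (PowerSeries.coeff c) ((Z-1) * (U N - H N)) = 0 := by
    rw [show (q:S) = PowerSeries.X from rfl, X_pow_dvd_iff] at key
    exact key c (by omega)
  have hZ : (Z:S) - 1 = PowerSeries.C (Polynomial.X - 1) := by
    rw [show (Z:S) = PowerSeries.C Polynomial.X from rfl, map_sub, map_one]
  rw [hZ, coeff_C_mul, map_sub] at hcoeff
  rcases mul_eq_zero.mp hcoeff with h | h
  · exact absurd h (by simpa using Polynomial.X_sub_C_ne_zero (1:ℤ))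
  · exact sub_eq_zero.mp h

private def ee : S →+* PowerSeries ℤ := PowerSeries.map (Polynomial.evalRingHom 1)

private def peZ (N : ℕ) : PowerSeries ℤ := ∏ k ∈ Icc 1 N, (1 - PowerSeries.X^(2*k))

private lemma ee_q (k : ℕ) : ee ((q:S)^k) = PowerSeries.X^k := by
  rw [map_pow, ee, show (q:S) = PowerSeries.X from rfl, PowerSeries.map_X]

private lemma ee_Z : ee (Z:S) = 1 := by
  rw [ee, show (Z:S) = PowerSeries.C Polynomial.X from rfl, PowerSeries.map_C]
  simp

private lemma ee_pe (N : ℕ) : ee (pe N) = peZ N := by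
  rw [pe, peZ, map_prod]
  refine prod_congr rfl ?_
  intro k _
  rw [map_sub, map_one, ee_q]

private lemma ee_U (N : ℕ) (hN : 1 ≤ N) : ee (U N) = peZ N * peZ N * peZ (N-1) := by
  rw [U, map_mul, map_mul, ee_pe]
  congr 1
  · congr 1
    rw [map_prod, peZ]
    refine prod_congr rfl ?_
    intro k _
    rw [map_sub, map_one, map_mul, ee_Z, ee_q, one_mul]
  · rw [map_prod, peZ]
    rw [show Icc 2 N = Finset.map (addRightEmbedding 1) (Icc 1 (N-1)) from by
      rw [Finset.map_add_right_Icc]; congr 1 <;> omega]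
    rw [Finset.prod_map]
    refine prod_congr rfl ?_
    intro k _
    simp only [addRightEmbedding_apply]
    rw [map_sub, ee_Z, ee_q, show 2*(k+1)-2 = 2*k by omega]

private lemma ee_H_coeff (N c : ℕ) (hc : ∀ j : ℕ, c ≠ j*(j+1)) :
    PowerSeries.coeff c (ee (H N)) = 0 := by
  rw [H, map_sum]
  have hterm : ∀ j ∈ range N, ee ((-1)^j * q^(j*(j+1)) * Z^(N-1-j) * (∑ c ∈ range (2*j+1), Z^c))
      = PowerSeries.C ((-1)^j * (2*j+1) : ℤ) * PowerSeries.X^(j*(j+1)) := by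
    intro j _
    rw [map_mul, map_mul, map_mul, map_pow, ee_q, map_pow, ee_Z, map_sum]
    have hsum : ∑ x ∈ range (2*j+1), ee ((Z:S)^x) = ((2*j+1 : ℕ) : PowerSeries ℤ) := by
      rw [sum_congr rfl (fun x _ => by rw [map_pow, ee_Z, one_pow])]
      simp
    rw [hsum, one_pow, mul_one, map_neg, map_one]
    rw [map_mul, map_pow, map_neg, map_one]
    push_cast [map_add, map_mul, map_one, map_natCast, map_ofNat]
    ring
  rw [sum_congr rfl hterm, map_sum]
  refine sum_eq_zero ?_
  intro j _
  rw [PowerSeries.coeff_C_mul, PowerSeries.coeff_X_pow, if_neg (hc j)]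
  ring

private lemma cube_coeff (n : ℕ) (hn : ∀ j : ℕ, n ≠ j*(j+1)) :
    PowerSeries.coeff n (peZ (n+1) * peZ (n+1) * peZ n) = 0 := by
  have h := coeff_UH n n le_rfl
  have h2 : PowerSeries.coeff n (ee (U (n+1))) = PowerSeries.coeff n (ee (H (n+1))) := by
    rw [ee, PowerSeries.coeff_map, PowerSeries.coeff_map, h]
  rw [ee_U (n+1) (by omega), show n+1-1 = n from rfl] at h2
  rw [h2, ee_H_coeff (n+1) n hn]

private lemma dvd_mul_congZ {m : ℕ} {a b c d : PowerSeries ℤ} (h1 : (PowerSeries.X)^m ∣ a - b)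
    (h2 : (PowerSeries.X)^m ∣ c - d) : (PowerSeries.X)^m ∣ a*c - b*d := by
  have h : a*c - b*d = (a-b)*c + b*(c-d) := by ring
  rw [h]; exact dvd_add (h1.mul_right c) (h2.mul_left b)

private lemma prod_tailZ (m a : ℕ) : ∀ (b : ℕ), m ≤ 2*a →
    (PowerSeries.X : PowerSeries ℤ)^m ∣ ((∏ k ∈ Icc a b, (1 - PowerSeries.X^(2*k))) - 1)
  | 0, hm => by
      rcases Nat.eq_zero_or_pos a with h | h
      · subst h
        have hm0 : m = 0 := by omega
        subst hm0; simp
      · rw [Finset.Icc_eq_empty (by omega)]; simp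
  | (b+1), hm => by
      rcases Nat.lt_or_ge (b+1) a with h | h
      · rw [Finset.Icc_eq_empty (by omega)]; simp
      · rw [prod_Icc_succ_top h]
        have key : (∏ k ∈ Icc a b, (1 - (PowerSeries.X:PowerSeries ℤ)^(2*k))) * (1 - PowerSeries.X^(2*(b+1))) - 1
            = ((∏ k ∈ Icc a b, (1 - PowerSeries.X^(2*k))) - 1) * (1 - PowerSeries.X^(2*(b+1)))
              - PowerSeries.X^(2*(b+1)) := by ring
        rw [key]
        refine dvd_sub (Dvd.dvd.mul_right (prod_tailZ m a b hm) _) ?_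
        exact pow_dvd_pow _ (by omega)

private lemma peZ_split (a b : ℕ) (h : a ≤ b) :
    peZ b = peZ a * ∏ k ∈ Ioc a b, (1 - (PowerSeries.X:PowerSeries ℤ)^(2*k)) := by
  rw [peZ, peZ, show (1:ℕ) = 0+1 from rfl, Finset.Icc_add_one_left_eq_Ioc, Finset.Icc_add_one_left_eq_Ioc,
    prod_Ioc_consecutive _ (Nat.zero_le a) h]

private lemma peZ_coeff_stable (c M : ℕ) (hM : c ≤ M) :
    PowerSeries.coeff c (peZ M) = PowerSeries.coeff c (peZ c) := by
  rw [peZ_split c M hM]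
  have h1 : peZ c * (∏ k ∈ Ioc c M, (1 - (PowerSeries.X:PowerSeries ℤ)^(2*k))) - peZ c
      = peZ c * ((∏ k ∈ Ioc c M, (1 - PowerSeries.X^(2*k))) - 1) := by ring
  have h2 : (PowerSeries.X : PowerSeries ℤ)^(c+1)
      ∣ peZ c * (∏ k ∈ Ioc c M, (1 - PowerSeries.X^(2*k))) - peZ c := by
    rw [h1]
    refine Dvd.dvd.mul_left ?_ _
    have := prod_tailZ (c+1) (c+1) M (by omega)
    rw [Finset.Icc_add_one_left_eq_Ioc] at this
    exact this
  rw [X_pow_dvd_iff] at h2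
  have := h2 c (by omega)
  rw [map_sub, sub_eq_zero] at this
  exact this



end Jacobi

namespace JacobiAux

private lemma coeff_f2 (c : ℕ) :
    PowerSeries.coeff c (f 2) = PowerSeries.coeff c (peZ c) := by
  simp [f, peZ, PowerSeries.coeff_mk]

private lemma f2_dvd (n M : ℕ) (hM : n ≤ M) :
    (PowerSeries.X : PowerSeries ℤ)^(n+1) ∣ (f 2 - peZ M) := by
  rw [PowerSeries.X_pow_dvd_iff]
  intro m hm
  rw [map_sub, coeff_f2 m, peZ_coeff_stable m M (by omega), sub_self]

private lemma f2_cube_coeff (n : ℕ) (hn : ∀ j : ℕ, n ≠ j*(j+1)) :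
    PowerSeries.coeff n ((f 2)^3) = 0 := by
  have hd : (PowerSeries.X : PowerSeries ℤ)^(n+1)
      ∣ ((f 2)^3 - peZ (n+1) * peZ (n+1) * peZ n) := by
    have e : (f 2)^3 = f 2 * f 2 * f 2 := by ring
    rw [e]
    exact dvd_mul_congZ
      (dvd_mul_congZ (f2_dvd n (n+1) (by omega)) (f2_dvd n (n+1) (by omega)))
      (f2_dvd n n le_rfl)
  rw [PowerSeries.X_pow_dvd_iff] at hd
  have h := hd n (by omega)
  rw [map_sub, sub_eq_zero] at h
  rw [h, cube_coeff n hn]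

private lemma f2_cube_support (a : ℕ) (h : PowerSeries.coeff a ((f 2)^3) ≠ 0) :
    ∃ j : ℕ, a = j*(j+1) := by
  by_contra hno
  push_neg at hno
  exact h (f2_cube_coeff a hno)

end JacobiAux

/-- If the coefficient of `q^n` in `f_2^6` is nonzero and `n ≡ 3 (mod 7)`,
then `n ≡ 24 (mod 49)`. -/
theorem f2_pow_six_coeff_support (n : ℕ)
    (h : PowerSeries.coeff n ((f 2) ^ 6) ≠ 0) (h7 : n % 7 = 3) : n % 49 = 24 := by
  have h6 : (f 2)^6 = (f 2)^3 * (f 2)^3 := by ring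
  rw [h6, PowerSeries.coeff_mul] at h
  obtain ⟨p, hp, hne⟩ := Finset.exists_ne_zero_of_sum_ne_zero h
  rw [Finset.HasAntidiagonal.mem_antidiagonal] at hp
  have h1 : PowerSeries.coeff p.1 ((f 2)^3) ≠ 0 := fun hz => hne (by rw [hz, zero_mul])
  have h2 : PowerSeries.coeff p.2 ((f 2)^3) ≠ 0 := fun hz => hne (by rw [hz, mul_zero])
  obtain ⟨j, hj⟩ := JacobiAux.f2_cube_support p.1 h1
  obtain ⟨k, hk⟩ := JacobiAux.f2_cube_support p.2 h2
  have hn4 : (2*j+1)^2 + (2*k+1)^2 = 4*n+2 := by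
    have : n = j*(j+1) + k*(k+1) := by rw [← hp, hj, hk]
    rw [this]; ring
  have hd7 : 7 ∣ 4*n+2 := by omega
  have hcast : ((2*j+1 : ℕ) : ZMod 7)^2 + ((2*k+1:ℕ) : ZMod 7)^2 = 0 := by
    have hc : (((2*j+1)^2 + (2*k+1)^2 : ℕ) : ZMod 7) = 0 := by
      rw [hn4]; exact (ZMod.natCast_eq_zero_iff _ 7).mpr hd7
    push_cast at hc
    exact_mod_cast hc
  have hdec : ∀ x y : ZMod 7, x^2 + y^2 = 0 → x = 0 ∧ y = 0 := by decide
  obtain ⟨hx, hy⟩ := hdec _ _ hcast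
  have hdj : 7 ∣ 2*j+1 := (ZMod.natCast_eq_zero_iff _ 7).mp hx
  have hdk : 7 ∣ 2*k+1 := (ZMod.natCast_eq_zero_iff _ 7).mp hy
  obtain ⟨a, ha⟩ := hdj
  obtain ⟨b, hb⟩ := hdk
  have h49 : 4*n+2 = 49*(a^2+b^2) := by rw [← hn4, ha, hb]; ring
  have hex : ∃ m, 4*n+2 = 49*m := ⟨a^2+b^2, h49⟩
  obtain ⟨m, hm⟩ := hex
  omega
end

section
/- For every integer c ≥ 0, a_{49c+5}(3) ≡ 0 (mod 7). -/
/-!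
Modulo `q⁴` we have `f₁ ≡ 1 - q - q²` and `f₂ ≡ 1 - q²`, hence `f₂ᵐ ≡ 1 - m q²`, and inverting
`(1 - q - q²)(1 - m q²)` modulo `q⁴` gives `1 + q + (m + 2) q² + (m + 3) q³`. So `a_c(3) = c + 2`
(the partitions `3`, `1 + 1 + 1` and the `c` colourings of `2 + 1`), and `a_{49c+5}(3) = 49c + 7`.
-/

open PowerSeries Finset

theorem one_sub_pow_of_sq_eq_zero {R : Type*} [CommRing R] {y : R} (hy : y ^ 2 = 0) (m : ℕ) :
    (1 - y) ^ m = 1 - m * y := by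
  induction m with
  | zero => simp
  | succ m ih => rw [pow_succ, ih]; push_cast; linear_combination (m : R) * hy

theorem PowerSeries.coeff_eq_of_mk_X_pow_eq {R : Type*} [CommRing R] {N n : ℕ} {g h : R⟦X⟧}
    (hgh : Ideal.Quotient.mk (Ideal.span {X ^ N}) g = Ideal.Quotient.mk _ h) (hn : n < N) :
    coeff n g = coeff n h := by
  rw [Ideal.Quotient.eq, Ideal.mem_span_singleton, X_pow_dvd_iff] at hgh
  simpa [sub_eq_zero] using hgh n hn

theorem X_pow_dvd_prod_Icc_sub_prod_Icc {m : ℕ} (hm : 0 < m) {n N : ℕ} (hnN : n ≤ N) :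
    (X : ℤ⟦X⟧) ^ (n + 1) ∣
      ∏ k ∈ Icc 1 N, (1 - X ^ (m * k)) - ∏ k ∈ Icc 1 n, (1 - X ^ (m * k)) := by
  induction N, hnN using Nat.le_induction with
  | base => simp
  | succ N hnN ih =>
    rw [prod_Icc_succ_top (by omega)]
    have hX : (X : ℤ⟦X⟧) ^ (n + 1) ∣ X ^ (m * (N + 1)) := pow_dvd_pow X (by nlinarith)
    convert ih.sub (hX.mul_left (∏ k ∈ Icc 1 N, (1 - X ^ (m * k)))) using 1
    ring

theorem mk_f_eq_mk_prod_Icc {m : ℕ} (hm : 0 < m) (N : ℕ) :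
    Ideal.Quotient.mk (Ideal.span {X ^ (N + 1)}) (f m) =
      Ideal.Quotient.mk _ (∏ k ∈ Icc 1 N, (1 - X ^ (m * k))) := by
  rw [Ideal.Quotient.eq, Ideal.mem_span_singleton, X_pow_dvd_iff]
  intro n hn
  have hdvd := X_pow_dvd_prod_Icc_sub_prod_Icc hm (Nat.le_of_lt_succ hn)
  rw [X_pow_dvd_iff] at hdvd
  have hcoeff := hdvd n n.lt_succ_self
  rw [map_sub, sub_eq_zero] at hcoeff
  simp [f, hcoeff]

theorem coeff_three_eq_of_mul_f_one_mul_f_two_pow_eq_one (m : ℕ) {A : ℤ⟦X⟧}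
    (hA : A * (f 1 * f 2 ^ m) = 1) : coeff 3 A = m + 3 := by
  set π := Ideal.Quotient.mk (Ideal.span {(X : ℤ⟦X⟧) ^ 4})
  set x := π X with hxdef
  have hx : x ^ 4 = 0 := by
    rw [hxdef, ← map_pow, Ideal.Quotient.eq_zero_iff_mem]
    exact Ideal.mem_span_singleton_self _
  have hf1 : π (f 1) = 1 - x - x ^ 2 := by
    rw [mk_f_eq_mk_prod_Icc one_pos 3, prod_Icc_succ_top (by norm_num),
      prod_Icc_succ_top (by norm_num), Icc_self, prod_singleton]
    simp only [map_mul, map_sub, map_one, map_pow, one_mul]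
    linear_combination (1 + x - x ^ 2) * hx
  have hf2 : π (f 2) = 1 - x ^ 2 := by
    rw [mk_f_eq_mk_prod_Icc two_pos 3, prod_Icc_succ_top (by norm_num),
      prod_Icc_succ_top (by norm_num), Icc_self, prod_singleton]
    simp only [map_mul, map_sub, map_one, map_pow]
    linear_combination (1 - x ^ 2) * (x ^ 6 - x ^ 2 - 1) * hx
  have hAB : π A * ((1 - x - x ^ 2) * (1 - m * x ^ 2)) = 1 := by
    rw [← one_sub_pow_of_sq_eq_zero (by linear_combination hx) m, ← hf1, ← hf2, ← map_pow,
      ← map_mul, ← map_mul, hA, map_one]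
  have hPB : (1 + x + (m + 2) * x ^ 2 + (m + 3) * x ^ 3) * ((1 - x - x ^ 2) * (1 - m * x ^ 2)) =
      1 := by
    linear_combination (-(m ^ 2 + 2 * m + 5) - (m + 3) * x + (2 * m ^ 2 + 5 * m) * x ^ 2 +
      (m ^ 2 + 3 * m) * x ^ 3 : ℤ⟦X⟧ ⧸ Ideal.span {(X : ℤ⟦X⟧) ^ 4}) * hx
  have hAP : π A = π (1 + X + C ((m : ℤ) + 2) * X ^ 2 + C ((m : ℤ) + 3) * X ^ 3) := by
    simp only [map_add, map_mul, map_pow, map_one, map_natCast, map_ofNat, ← hxdef]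
    linear_combination (1 + x + (m + 2) * x ^ 2 + (m + 3) * x ^ 3) * hAB - π A * hPB
  rw [coeff_eq_of_mk_X_pow_eq hAP (by norm_num), map_add, map_add, map_add, coeff_one, coeff_X,
    coeff_C_mul_X_pow, coeff_C_mul_X_pow]
  norm_num

/-- For every integer `c ≥ 0`, `a_{49c+5}(3) ≡ 0 (mod 7)`, where
`∑ a_c(n) q^n = 1/(f_1 f_2^{c-1})`. -/
theorem a_49c5_three_mod7 (c : ℕ) (A : PowerSeries ℤ)
    (hA : A * (f 1 * (f 2) ^ (49 * c + 4)) = 1) :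
    (7 : ℤ) ∣ PowerSeries.coeff 3 A := by
  rw [coeff_three_eq_of_mul_f_one_mul_f_two_pow_eq_one _ hA]
  exact ⟨7 * c + 1, by push_cast; ring⟩
end
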